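/- Consider the upper block triangular system z' = [[A(t), C(t)],[0, B(t)]] z on [0,∞). Assume: (i) x' = A(t)x and y' = B(t)y have half (M e^{ℓs}, ω)- and half (M̃ e^{ℓ̃s}, ω̃)-nonuniform bounded growth respectively; (ii) they have (K e^{εs}, α)- and (K̃ e^{ε̃s}, α̃)-nonuniform exponential dichotomies on [0,∞) with projections P^A(t), P^B(t); (iii) setting θ = max{ℓ, ℓ̃, ε, ε̃}, there exist parametrized families of norms |·|_t^A on ℝⁿ and |·|_t^B on ℝᵐ with L₁|x| ≤ |x|_t ≤ L₂ e^{θt}|x| (L₁ > 0, L₂ ≥ 1), with respect to which the diagonal systems satisfy the uniform estimates ‖X(t,s)P^A(s)‖_{s,t} ≤ κ e^{−α(t−s)} (t ≥ s), ‖X(t,s)(I−P^A(s))‖_{s,t} ≤ κ e^{−α(s−t)} (s ≥ t), ‖Y(t,s)P^B(s)‖_{s,t} ≤ κ̃ e^{−α̃(t−s)} (t ≥ s), ‖Y(t,s)(I−P^B(s))‖_{s,t} ≤ κ̃ e^{−α̃(s−t)} (s ≥ t), ‖X(t,s)‖_{s,t} ≤ μ e^{ω(t−s)} and ‖Y(t,s)‖_{s,t}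 ≤ μ̃ e^{ω̃(t−s)} (t ≥ s), and such that ‖C‖_{τ,∞} := sup_{τ≥0} ‖C(τ)‖_{τ,τ} < ∞; assume moreover θ < min{α, α̃}. Then the full triangular system has a (K̄ e^{ε̄s}, ᾱ)-nonuniform exponential dichotomy on [0,∞) for some K̄ ≥ 1 and 0 ≤ ε̄ < ᾱ, and half (M̄ e^{θ̄s}, ω̄)-nonuniform bounded growth for some M̄ ≥ 1, ω̄ > 0, θ̄ ≥ 0. -/

import Mathlib

open MeasureTheory Filter

noncomputable section

/-- `T` is the evolution operator of the linear system `x' = A(t) x`. -/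
def IsEvolution {E : Type*} [NormedAddCommGroup E] [NormedSpace ℝ E]
    (A : ℝ → E →L[ℝ] E) (T : ℝ → ℝ → E →L[ℝ] E) : Prop :=
  (∀ s : ℝ, T s s = ContinuousLinearMap.id ℝ E) ∧
  (∀ t r s : ℝ, (T t r).comp (T r s) = T t s) ∧
  (∀ (s : ℝ) (x : E) (t : ℝ), HasDerivAt (fun r => T r s x) (A t (T t s x)) t)

/-- `(K e^{ε s}, γ)`-nonuniform exponential dichotomy on `[0,∞)` with projections `P`. -/
def NonuniformED {E : Type*} [NormedAddCommGroup E] [NormedSpace ℝ E]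
    (T : ℝ → ℝ → E →L[ℝ] E) (P : ℝ → E →L[ℝ] E) (K ε γ : ℝ) : Prop :=
  1 ≤ K ∧ 0 ≤ ε ∧ ε < γ ∧
  (∀ t : ℝ, 0 ≤ t → (P t).comp (P t) = P t) ∧
  (∀ t s : ℝ, 0 ≤ t → 0 ≤ s → (T t s).comp (P s) = (P t).comp (T t s)) ∧
  (∀ s t : ℝ, 0 ≤ s → s ≤ t →
    ‖(T t s).comp (P s)‖ ≤ K * Real.exp (-γ * (t - s)) * Real.exp (ε * s)) ∧
  (∀ t s : ℝ, 0 ≤ t → t ≤ s →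
    ‖(T t s).comp (ContinuousLinearMap.id ℝ E - P s)‖ ≤ K * Real.exp (-γ * (s - t)) * Real.exp (ε * s))

/-- Nonuniform exponential contraction: dichotomy with `P = I`. -/
def NonuniformContraction {E : Type*} [NormedAddCommGroup E] [NormedSpace ℝ E]
    (T : ℝ → ℝ → E →L[ℝ] E) (K ε γ : ℝ) : Prop :=
  NonuniformED T (fun _ => ContinuousLinearMap.id ℝ E) K ε γ

/-- Half `(M e^{δ s}, ν)`-nonuniform bounded growth on `[0,∞)`. -/
def HalfNBG {E : Type*} [NormedAddCommGroup E] [NormedSpace ℝ E]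
    (T : ℝ → ℝ → E →L[ℝ] E) (M δ ν : ℝ) : Prop :=
  1 ≤ M ∧ 0 ≤ δ ∧ 0 < ν ∧
  ∀ s t : ℝ, 0 ≤ s → s ≤ t → ‖T t s‖ ≤ M * Real.exp (ν * (t - s)) * Real.exp (δ * s)

/-- Nonuniform exponential dichotomy spectrum of the system with evolution operator `T`. -/
def NonuniformSpectrum {E : Type*} [NormedAddCommGroup E] [NormedSpace ℝ E]
    (T : ℝ → ℝ → E →L[ℝ] E) : Set ℝ :=
  {l : ℝ | ¬ ∃ P K ε γ, NonuniformED (fun t s => Real.exp (-l * (t - s)) • T t s) P K ε γ}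

/-- Piecewise continuity: on each compact interval, continuity off a finite set. -/
def PiecewiseContinuous {E : Type*} [TopologicalSpace E] (ω : ℝ → E) : Prop :=
  ∀ a b : ℝ, ∃ s : Finset ℝ, ContinuousOn ω (Set.Icc a b \ ↑s)

/-- Global nonuniform asymptotic stability of the trivial solution of `x' = g(t,x)`. -/
def GloballyNonuniformlyAsymptoticallyStable {E : Type*} [NormedAddCommGroup E]
    [NormedSpace ℝ E] (g : ℝ → E → E) : Prop :=
  (∀ t₀ : ℝ, 0 ≤ t₀ → ∀ η > (0:ℝ), ∃ δ > (0:ℝ), ∀ x : ℝ → E,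
    (∀ t, t₀ ≤ t → HasDerivAt x (g t (x t)) t) → ‖x t₀‖ < δ →
      ∀ t, t₀ ≤ t → ‖x t‖ < η) ∧
  (∀ t₀ : ℝ, 0 ≤ t₀ → ∀ x : ℝ → E,
    (∀ t, t₀ ≤ t → HasDerivAt x (g t (x t)) t) → Tendsto x atTop (nhds 0))

/-- Operator norm with parametrized norm `ND s` on the domain and `NC t` on the codomain. -/
def pNorm {V W : Type*} [NormedAddCommGroup V] [NormedSpace ℝ V]
    [NormedAddCommGroup W] [NormedSpace ℝ W]
    (ND : ℝ → V → ℝ) (NC : ℝ → W → ℝ) (s t : ℝ) (U : V →L[ℝ] W) : ℝ :=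
  sSup {r : ℝ | ∃ x : V, x ≠ 0 ∧ r = NC t (U x) / ND s x}

/-- `N t` is a norm for each `t` (triangle inequality and absolute homogeneity). -/
def IsNormFamily {V : Type*} [NormedAddCommGroup V] [NormedSpace ℝ V]
    (N : ℝ → V → ℝ) : Prop :=
  (∀ t x y, N t (x + y) ≤ N t x + N t y) ∧ ∀ (t : ℝ) (c : ℝ) (x : V), N t (c • x) = |c| * N t x

/-- The block upper triangular operator `[[A, C], [0, B]]` on `E × F`. -/
def blockUpper {E F : Type*} [NormedAddCommGroup E] [NormedSpace ℝ E]
    [NormedAddCommGroup F] [NormedSpace ℝ F]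
    (A : E →L[ℝ] E) (B : F →L[ℝ] F) (C : F →L[ℝ] E) : (E × F) →L[ℝ] (E × F) :=
  ((A.comp (ContinuousLinearMap.fst ℝ E F)) + (C.comp (ContinuousLinearMap.snd ℝ E F))).prod
    (B.comp (ContinuousLinearMap.snd ℝ E F))

/-- Evolution operator of the scalar equation `x' = a(t) x`. -/
def scalarEvol (a : ℝ → ℝ) (t s : ℝ) : ℝ →L[ℝ] ℝ :=
  Real.exp (∫ τ in s..t, a τ) • (1 : ℝ →L[ℝ] ℝ)


/-! ### Auxiliary material for the proof -/

section AuxGeneric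

variable {E : Type*} [NormedAddCommGroup E] [NormedSpace ℝ E]
variable {F : Type*} [NormedAddCommGroup F] [NormedSpace ℝ F]

/-- In finite dimension, pointwise differentiability of an operator family gives
differentiability as an operator-valued map. -/
theorem hasDerivAt_clm_of_apply [FiniteDimensional ℝ E] [FiniteDimensional ℝ F]
    (f : ℝ → E →L[ℝ] F) (D : E →L[ℝ] F) (t : ℝ)
    (h : ∀ x, HasDerivAt (fun r => f r x) (D x) t) : HasDerivAt f D t := by
  classical
  set b := Module.finBasis ℝ E with hb
  let ev : (E →L[ℝ] F) →ₗ[ℝ] (Fin (Module.finrank ℝ E) → F) :=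
    { toFun := fun L => fun i => L (b i)
      map_add' := by intro L L'; funext i; simp
      map_smul' := by intro c L; funext i; simp }
  have hinj : Function.Injective ev := by
    intro L L' hLL
    apply ContinuousLinearMap.coe_injective
    apply b.ext
    intro i
    exact congrFun hLL i
  have hsurj : Function.Surjective ev := by
    intro v
    refine ⟨LinearMap.toContinuousLinearMap (b.constr ℝ v), ?_⟩
    funext i
    simp [ev]
  let e : (E →L[ℝ] F) ≃ₗ[ℝ] (Fin (Module.finrank ℝ E) → F) :=
    LinearEquiv.ofBijective ev ⟨hinj, hsurj⟩
  let L : (Fin (Module.finrank ℝ E) → F) →L[ℝ] (E →L[ℝ] F) :=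
    LinearMap.toContinuousLinearMap e.symm.toLinearMap
  have key : ∀ M : E →L[ℝ] F, L (fun i => M (b i)) = M := by
    intro M
    have h1 : (fun i => M (b i)) = e M := rfl
    rw [h1]
    show e.symm.toLinearMap (e M) = M
    simp
  have hg : HasDerivAt (fun r => (fun i => f r (b i))) (fun i => D (b i)) t :=
    hasDerivAt_pi.2 (fun i => h (b i))
  have h3 := L.hasFDerivAt.comp_hasDerivAt t hg
  have h4 : (⇑L ∘ fun r => fun i => f r (b i)) = f := funext fun r => key (f r)
  rw [h4, key D] at h3
  exact h3

end AuxGeneric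
set_option linter.unusedSectionVars false
section AuxEvol

variable {E : Type*} [NormedAddCommGroup E] [NormedSpace ℝ E] [FiniteDimensional ℝ E]
variable {A : ℝ → E →L[ℝ] E} {X : ℝ → ℝ → E →L[ℝ] E}

theorem evol_unit_mul (hX : IsEvolution A X) (t s : ℝ) : (X t s) * (X s t) = 1 := by
  rw [ContinuousLinearMap.mul_def, hX.2.1 t s t, hX.1, ContinuousLinearMap.one_def]

/-- The evolution operators as units of the operator ring. -/
def evolUnit (hX : IsEvolution A X) (t s : ℝ) : (E →L[ℝ] E)ˣ :=
  ⟨X t s, X s t, evol_unit_mul hX t s, evol_unit_mul hX s t⟩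

theorem evol_apply_inv_apply (hX : IsEvolution A X) (t s : ℝ) (x : E) :
    X t s (X s t x) = x := by
  have h := evol_unit_mul hX t s
  rw [ContinuousLinearMap.mul_def, ContinuousLinearMap.one_def] at h
  calc X t s (X s t x) = ((X t s).comp (X s t)) x := rfl
  _ = x := by rw [h]; rfl

theorem evol_hasDerivAt (hX : IsEvolution A X) (t s : ℝ) :
    HasDerivAt (fun r => X r s) ((A t).comp (X t s)) t :=
  hasDerivAt_clm_of_apply _ _ _ (fun x => by
    simpa only [ContinuousLinearMap.comp_apply] using hX.2.2 s x t)

theorem evol_ring_inverse (hX : IsEvolution A X) (t s : ℝ) :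
    Ring.inverse (X t s) = X s t :=
  Ring.inverse_unit (evolUnit hX t s)

set_option maxHeartbeats 1000000 in
set_option synthInstance.maxHeartbeats 400000 in
theorem evol_hasDerivAt_snd (hX : IsEvolution A X) (s t : ℝ) :
    HasDerivAt (fun r => X s r) (-((X s t).comp (A t))) t := by
  have h1 := evol_hasDerivAt hX t s
  have h2 := (hasFDerivAt_ringInverse (𝕜 := ℝ) (evolUnit hX t s)).comp_hasDerivAt t h1
  have h4 : (Ring.inverse ∘ fun r => X r s) = fun r => X s r := by
    funext r
    simp only [Function.comp]
    exact evol_ring_inverse hX r s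
  rw [h4] at h2
  have h5 : (-((ContinuousLinearMap.mulLeftRight ℝ (E →L[ℝ] E)) ↑(evolUnit hX t s)⁻¹)
      ↑(evolUnit hX t s)⁻¹) ((A t).comp (X t s)) = -((X s t).comp (A t)) := by
    have hcoe : (↑(evolUnit hX t s)⁻¹ : E →L[ℝ] E) = X s t := rfl
    simp only [ContinuousLinearMap.neg_apply, ContinuousLinearMap.mulLeftRight_apply, hcoe]
    apply congrArg Neg.neg
    rw [show (A t).comp (X t s) = A t * X t s from (ContinuousLinearMap.mul_def _ _).symm,
      mul_assoc (X s t) (A t * X t s) (X s t), mul_assoc (A t) (X t s) (X s t),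
      evol_unit_mul hX t s, mul_one, ContinuousLinearMap.mul_def]
  rw [h5] at h2
  exact h2

theorem evol_cont_fst (hX : IsEvolution A X) (s : ℝ) : Continuous fun t => X t s := by
  have h : Differentiable ℝ (fun t => X t s) := fun t => (evol_hasDerivAt hX t s).differentiableAt
  exact h.continuous

theorem evol_cont_snd (hX : IsEvolution A X) (s : ℝ) : Continuous fun t => X s t := by
  have h : Differentiable ℝ (fun t => X s t) := fun t => (evol_hasDerivAt_snd hX s t).differentiableAt
  exact h.continuous

/-- Uniqueness of solutions along an evolution operator. -/
theorem evol_unique (hX : IsEvolution A X) {η : ℝ → E}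
    (h : ∀ τ, HasDerivAt η (A τ (η τ)) τ) (s t : ℝ) : η t = X t s (η s) := by
  have key : ∀ τ, HasDerivAt (fun r => X s r (η r)) 0 τ := by
    intro τ
    have h1 := (evol_hasDerivAt_snd hX s τ).clm_apply (h τ)
    have h2 : (-((X s τ).comp (A τ))) (η τ) + (X s τ) (A τ (η τ)) = 0 := by
      simp [ContinuousLinearMap.neg_apply, ContinuousLinearMap.comp_apply]
    rwa [h2] at h1
  have hconst := is_const_of_deriv_eq_zero (f := fun r => X s r (η r))
    (fun τ => (key τ).differentiableAt) (fun τ => (key τ).deriv) t s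
  have h2 : X s t (η t) = η s := by
    have : X s s (η s) = η s := by rw [hX.1]; rfl
    rw [hconst, this]
  rw [← h2, evol_apply_inv_apply hX t s]

end AuxEvol
set_option linter.unusedSectionVars false

section AuxNorm

variable {V : Type*} [NormedAddCommGroup V] [NormedSpace ℝ V]
variable {W : Type*} [NormedAddCommGroup W] [NormedSpace ℝ W]

theorem normfam_zero {N : ℝ → V → ℝ} (hfam : IsNormFamily N) (t : ℝ) : N t 0 = 0 := by
  have := hfam.2 t 0 0
  simpa using this

theorem normfam_neg {N : ℝ → V → ℝ} (hfam : IsNormFamily N) (t : ℝ) (x : V) :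
    N t (-x) = N t x := by simpa using hfam.2 t (-1) x

theorem normfam_sub_le {N : ℝ → V → ℝ} (hfam : IsNormFamily N) (t : ℝ) (x y : V) :
    N t (x - y) ≤ N t x + N t y := by
  have h1 := hfam.1 t x (-y)
  rw [normfam_neg hfam] at h1
  simpa [sub_eq_add_neg] using h1

/-- The fundamental inequality for the parametrized operator norm. -/
theorem pnorm_apply_le {ND : ℝ → V → ℝ} {NC : ℝ → W → ℝ} {s t : ℝ}
    (hDfam : IsNormFamily ND) (hCfam : IsNormFamily NC)
    {L₁ ct : ℝ} (hL₁ : 0 < L₁) (hct : 0 ≤ ct)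
    (hDlow : ∀ x, L₁ * ‖x‖ ≤ ND s x)
    (hCup : ∀ y, NC t y ≤ ct * ‖y‖)
    (U : V →L[ℝ] W) (x : V) :
    NC t (U x) ≤ pNorm ND NC s t U * ND s x := by
  rcases eq_or_ne x 0 with rfl | hx
  · simp [normfam_zero hCfam, normfam_zero hDfam]
  · have hxn : 0 < ‖x‖ := norm_pos_iff.2 hx
    have hDpos : 0 < ND s x := lt_of_lt_of_le (by positivity) (hDlow x)
    have hbdd : BddAbove {r : ℝ | ∃ y : V, y ≠ 0 ∧ r = NC t (U y) / ND s y} := by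
      refine ⟨ct * ‖U‖ / L₁, ?_⟩
      rintro r ⟨y, hy, rfl⟩
      have hyn : 0 < ‖y‖ := norm_pos_iff.2 hy
      have hDy : 0 < ND s y := lt_of_lt_of_le (by positivity) (hDlow y)
      rw [div_le_div_iff₀ hDy hL₁]
      have h1 : NC t (U y) ≤ ct * (‖U‖ * ‖y‖) :=
        le_trans (hCup _) (by
          have := U.le_opNorm y
          nlinarith)
      have h2 : ct * ‖U‖ * (L₁ * ‖y‖) ≤ ct * ‖U‖ * ND s y :=
        mul_le_mul_of_nonneg_left (hDlow y) (by positivity)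
      nlinarith
    have hmem : NC t (U x) / ND s x ∈ {r : ℝ | ∃ y : V, y ≠ 0 ∧ r = NC t (U y) / ND s y} :=
      ⟨x, hx, rfl⟩
    have hle : NC t (U x) / ND s x ≤ pNorm ND NC s t U := le_csSup hbdd hmem
    calc NC t (U x) = NC t (U x) / ND s x * ND s x := (div_mul_cancel₀ _ hDpos.ne').symm
    _ ≤ pNorm ND NC s t U * ND s x := mul_le_mul_of_nonneg_right hle hDpos.le

theorem pnorm_nonneg {ND : ℝ → V → ℝ} {NC : ℝ → W → ℝ} {s t : ℝ}
    (hD : ∀ x, 0 ≤ ND s x) (hC : ∀ y, 0 ≤ NC t y) (U : V →L[ℝ] W) :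
    0 ≤ pNorm ND NC s t U := by
  refine Real.sSup_nonneg ?_
  rintro r ⟨y, hy, rfl⟩
  exact div_nonneg (hC _) (hD _)

/-- A continuous seminorm bounded by the norm passes inside Bochner integrals. -/
theorem normfam_integral_le {V : Type*} [NormedAddCommGroup V] [NormedSpace ℝ V]
    [FiniteDimensional ℝ V] {X' : Type*} [MeasurableSpace X'] {μ : Measure X'} (N : V → ℝ)
    (hadd : ∀ x y, N (x + y) ≤ N x + N y) (hsmul : ∀ (c : ℝ) x, N (c • x) = |c| * N x)
    {cN : ℝ} (hN : ∀ x, N x ≤ cN * ‖x‖) {f : X' → V} (hf : Integrable f μ) :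
    N (∫ τ, f τ ∂μ) ≤ ∫ τ, N (f τ) ∂μ := by
  have hN0 : N 0 = 0 := by simpa using hsmul 0 0
  have hneg : ∀ x, N (-x) = N x := fun x => by simpa using hsmul (-1) x
  have hnonneg : ∀ x, 0 ≤ N x := by
    intro x
    have h1 : N 0 ≤ N x + N (-x) := by simpa using hadd x (-x)
    rw [hN0, hneg] at h1
    linarith
  have hN' : ∀ x, N x ≤ |cN| * ‖x‖ := fun x =>
    le_trans (hN x) (mul_le_mul_of_nonneg_right (le_abs_self cN) (norm_nonneg _))
  have hcont : Continuous N := by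
    refine (LipschitzWith.of_dist_le_mul (K := Real.toNNReal |cN|) (f := N) ?_).continuous
    intro x y
    rw [Real.coe_toNNReal _ (abs_nonneg cN), Real.dist_eq, dist_eq_norm]
    rw [abs_sub_le_iff]
    constructor
    · have h1 : N x ≤ N (x - y) + N y := by simpa [sub_add_cancel] using hadd (x - y) y
      have := hN' (x - y)
      linarith
    · have h1 : N y ≤ N (y - x) + N x := by simpa [sub_add_cancel] using hadd (y - x) x
      have h2 : N (y - x) = N (x - y) := by rw [← hneg (x - y)]; congr 1; abel
      have := hN' (x - y)
      linarith
  have hNfint : Integrable (fun τ => N (f τ)) μ := by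
    refine Integrable.mono' (hf.norm.const_mul |cN|) (hcont.comp_aestronglyMeasurable hf.1) ?_
    refine Filter.Eventually.of_forall (fun τ => ?_)
    rw [Real.norm_eq_abs, abs_of_nonneg (hnonneg _)]
    exact hN' _
  by_cases hv : (∫ τ, f τ ∂μ) = 0
  · rw [hv, hN0]
    exact integral_nonneg (fun τ => hnonneg _)
  · set v := ∫ τ, f τ ∂μ with hvdef
    set pm := LinearPMap.mkSpanSingleton (K := ℝ) (L := ℝ) (σ := RingHom.id ℝ) v (N v) hv with hpmdef
    have hvmem : v ∈ pm.domain := Submodule.mem_span_singleton_self v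
    have hpm : ∀ x : pm.domain, pm x ≤ N x := by
      rintro ⟨x, hx⟩
      rcases Submodule.mem_span_singleton.1 hx with ⟨c, rfl⟩
      have hsub : (⟨c • v, hx⟩ : pm.domain) = c • (⟨v, hvmem⟩ : pm.domain) := rfl
      have happ : pm ⟨c • v, hx⟩ = c * N v := by
        rw [hsub, pm.map_smul, LinearPMap.mkSpanSingleton_apply]
        simp
      rw [happ]
      rcases le_or_gt 0 c with hc | hc
      · have : N (c • v) = c * N v := by rw [hsmul, abs_of_nonneg hc]
        exact le_of_eq this.symm
      · have h1 : c * N v ≤ 0 := mul_nonpos_iff.2 (Or.inr ⟨hc.le, hnonneg v⟩)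
        exact le_trans h1 (hnonneg _)
    obtain ⟨g, hg1, hg2⟩ := exists_extension_of_le_sublinear pm N
      (fun c hc x => by rw [hsmul, abs_of_pos hc]) hadd hpm
    set G := LinearMap.toContinuousLinearMap g with hGdef
    have hGv : G v = N v := by
      have h1 : g v = pm ⟨v, hvmem⟩ := hg1 ⟨v, hvmem⟩
      have h2 : pm ⟨v, hvmem⟩ = N v := LinearPMap.mkSpanSingleton_apply ℝ ℝ hv (N v)
      show g v = N v
      rw [h1, h2]
    have hGf : Integrable (fun τ => G (f τ)) μ := G.integrable_comp hf
    calc N v = G v := hGv.symm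
    _ = ∫ τ, G (f τ) ∂μ := (ContinuousLinearMap.integral_comp_comm G hf).symm
    _ ≤ ∫ τ, N (f τ) ∂μ := integral_mono hGf hNfint (fun τ => by
        exact hg2 (f τ))

end AuxNorm
section AuxBlock

variable {E : Type*} [NormedAddCommGroup E] [NormedSpace ℝ E]
variable {F : Type*} [NormedAddCommGroup F] [NormedSpace ℝ F]

theorem blockUpper_apply (U : E →L[ℝ] E) (V : F →L[ℝ] F) (R : F →L[ℝ] E) (z : E × F) :
    blockUpper U V R z = (U z.1 + R z.2, V z.2) := rfl

theorem blockUpper_comp (U U' : E →L[ℝ] E) (V V' : F →L[ℝ] F) (R R' : F →L[ℝ] E) :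
    (blockUpper U V R).comp (blockUpper U' V' R') =
      blockUpper (U.comp U') (V.comp V') (U.comp R' + R.comp V') := by
  apply ContinuousLinearMap.ext
  intro z
  simp only [ContinuousLinearMap.comp_apply, blockUpper_apply, ContinuousLinearMap.add_apply,
    map_add]
  exact Prod.ext (by dsimp; abel) rfl

theorem id_eq_blockUpper :
    ContinuousLinearMap.id ℝ (E × F) =
      blockUpper (ContinuousLinearMap.id ℝ E) (ContinuousLinearMap.id ℝ F) 0 := by
  apply ContinuousLinearMap.ext
  intro z
  simp [blockUpper_apply]

theorem blockUpper_sub (U U' : E →L[ℝ] E) (V V' : F →L[ℝ] F) (R R' : F →L[ℝ] E) :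
    blockUpper U V R - blockUpper U' V' R' = blockUpper (U - U') (V - V') (R - R') := by
  apply ContinuousLinearMap.ext
  intro z
  simp only [ContinuousLinearMap.sub_apply, blockUpper_apply, Prod.mk_sub_mk]
  exact Prod.ext (by dsimp; abel) rfl

theorem blockUpper_norm_le (U : E →L[ℝ] E) (V : F →L[ℝ] F) (R : F →L[ℝ] E) :
    ‖blockUpper U V R‖ ≤ ‖U‖ + ‖V‖ + ‖R‖ := by
  refine ContinuousLinearMap.opNorm_le_bound _ (by positivity) (fun z => ?_)
  rw [blockUpper_apply, Prod.norm_def]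
  have h1 : ‖z.1‖ ≤ ‖z‖ := norm_fst_le z
  have h2 : ‖z.2‖ ≤ ‖z‖ := norm_snd_le z
  have hU := U.le_opNorm z.1
  have hV := V.le_opNorm z.2
  have hR := R.le_opNorm z.2
  refine max_le ?_ ?_
  · have : ‖U z.1 + R z.2‖ ≤ ‖U z.1‖ + ‖R z.2‖ := norm_add_le _ _
    nlinarith [norm_nonneg (U z.1), norm_nonneg (R z.2), norm_nonneg V, norm_nonneg z,
      norm_nonneg U, norm_nonneg R]
  · nlinarith [norm_nonneg V, norm_nonneg z, norm_nonneg U, norm_nonneg R]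

end AuxBlock

section AuxIntegral

variable {E : Type*} [NormedAddCommGroup E] [NormedSpace ℝ E] [CompleteSpace E]
variable {F : Type*} [NormedAddCommGroup F] [NormedSpace ℝ F] [CompleteSpace F]
variable {G : Type*} [NormedAddCommGroup G] [NormedSpace ℝ G] [CompleteSpace G]
variable {X' : Type*} [MeasurableSpace X'] {μ : Measure X'}

theorem integrable_clm_comp_left {φ : X' → F →L[ℝ] E} (L : E →L[ℝ] G)
    (h : Integrable φ μ) : Integrable (fun τ => L.comp (φ τ)) μ :=
  ((ContinuousLinearMap.compL ℝ F E G L).integrable_comp h).congr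
    (Filter.Eventually.of_forall fun τ => by simp only [ContinuousLinearMap.compL_apply])

theorem integrable_clm_comp_right {φ : X' → F →L[ℝ] E} (L : G →L[ℝ] F)
    (h : Integrable φ μ) : Integrable (fun τ => (φ τ).comp L) μ :=
  (((ContinuousLinearMap.compL ℝ G F E).flip L).integrable_comp h).congr
    (Filter.Eventually.of_forall fun τ => by
      simp only [ContinuousLinearMap.flip_apply, ContinuousLinearMap.compL_apply])

theorem integral_clm_comp_left {φ : X' → F →L[ℝ] E} (L : E →L[ℝ] G)
    (h : Integrable φ μ) : L.comp (∫ τ, φ τ ∂μ) = ∫ τ, L.comp (φ τ) ∂μ := by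
  have h2 := ContinuousLinearMap.integral_comp_comm (ContinuousLinearMap.compL ℝ F E G L) h
  simp only [ContinuousLinearMap.compL_apply] at h2
  exact h2.symm

theorem integral_clm_comp_right {φ : X' → F →L[ℝ] E} (L : G →L[ℝ] F)
    (h : Integrable φ μ) : (∫ τ, φ τ ∂μ).comp L = ∫ τ, (φ τ).comp L ∂μ := by
  have h2 := ContinuousLinearMap.integral_comp_comm
    ((ContinuousLinearMap.compL ℝ G F E).flip L) h
  simp only [ContinuousLinearMap.flip_apply, ContinuousLinearMap.compL_apply] at h2
  exact h2.symm

theorem intervalIntegral_clm_apply {φ : ℝ → F →L[ℝ] E} {a b : ℝ}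
    (h : IntervalIntegrable φ volume a b) (y : F) :
    (∫ τ in a..b, φ τ) y = ∫ τ in a..b, φ τ y := by
  simp only [intervalIntegral]
  rw [ContinuousLinearMap.sub_apply, ContinuousLinearMap.integral_apply h.1,
    ContinuousLinearMap.integral_apply h.2]

theorem intervalIntegral_clm_comp_left {φ : ℝ → F →L[ℝ] E} {a b : ℝ} (L : E →L[ℝ] G)
    (h : IntervalIntegrable φ volume a b) :
    L.comp (∫ τ in a..b, φ τ) = ∫ τ in a..b, L.comp (φ τ) := by
  simp only [intervalIntegral]
  rw [ContinuousLinearMap.comp_sub, integral_clm_comp_left L h.1, integral_clm_comp_left L h.2]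

theorem intervalIntegral_clm_comp_right {φ : ℝ → F →L[ℝ] E} {a b : ℝ} (L : G →L[ℝ] F)
    (h : IntervalIntegrable φ volume a b) :
    (∫ τ in a..b, φ τ).comp L = ∫ τ in a..b, (φ τ).comp L := by
  simp only [intervalIntegral]
  rw [ContinuousLinearMap.sub_comp, integral_clm_comp_right L h.1, integral_clm_comp_right L h.2]

theorem intervalIntegrable_clm_apply {φ : ℝ → F →L[ℝ] E} {a b : ℝ}
    (h : IntervalIntegrable φ volume a b) (y : F) :
    IntervalIntegrable (fun τ => φ τ y) volume a b :=
  ⟨h.1.apply_continuousLinearMap y, h.2.apply_continuousLinearMap y⟩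

end AuxIntegral
section AuxSandwich
set_option synthInstance.maxHeartbeats 1000000
set_option maxHeartbeats 1000000

variable {E : Type*} [NormedAddCommGroup E] [NormedSpace ℝ E]
variable {F : Type*} [NormedAddCommGroup F] [NormedSpace ℝ F]

theorem sandwich_aesm {C : ℝ → F →L[ℝ] E} (hC : LocallyIntegrable C volume)
    {u : ℝ → E →L[ℝ] E} {v : ℝ → F →L[ℝ] F} (hu : Continuous u) (hv : Continuous v) :
    AEStronglyMeasurable (fun τ => (u τ).comp ((C τ).comp (v τ))) volume := by
  have h1 : AEStronglyMeasurable (fun τ => (C τ).comp (v τ)) volume := by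
    have hp : AEStronglyMeasurable (fun τ => ((C τ), (v τ))) volume :=
      hC.aestronglyMeasurable.prodMk hv.aestronglyMeasurable
    have hcont : Continuous (fun p : (F →L[ℝ] E) × (F →L[ℝ] F) => p.1.comp p.2) :=
      continuous_fst.clm_comp continuous_snd
    exact hcont.comp_aestronglyMeasurable hp
  have hp : AEStronglyMeasurable (fun τ => ((u τ), (C τ).comp (v τ))) volume :=
    hu.aestronglyMeasurable.prodMk h1
  have hcont : Continuous (fun p : (E →L[ℝ] E) × (F →L[ℝ] E) => p.1.comp p.2) :=
    continuous_fst.clm_comp continuous_snd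
  exact hcont.comp_aestronglyMeasurable hp

theorem sandwich_norm_le (u : E →L[ℝ] E) (c : F →L[ℝ] E) (v : F →L[ℝ] F) :
    ‖u.comp (c.comp v)‖ ≤ ‖u‖ * ‖c‖ * ‖v‖ := by
  calc ‖u.comp (c.comp v)‖ ≤ ‖u‖ * ‖c.comp v‖ := ContinuousLinearMap.opNorm_comp_le _ _
  _ ≤ ‖u‖ * (‖c‖ * ‖v‖) :=
      mul_le_mul_of_nonneg_left (ContinuousLinearMap.opNorm_comp_le _ _) (norm_nonneg _)
  _ = ‖u‖ * ‖c‖ * ‖v‖ := by ring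

theorem sandwich_integrableOn_Ioc {C : ℝ → F →L[ℝ] E} (hC : LocallyIntegrable C volume)
    {u : ℝ → E →L[ℝ] E} {v : ℝ → F →L[ℝ] F} (hu : Continuous u) (hv : Continuous v)
    (a b : ℝ) :
    IntegrableOn (fun τ => (u τ).comp ((C τ).comp (v τ))) (Set.Ioc a b) volume := by
  obtain ⟨Mu, hMu⟩ := isCompact_Icc.exists_bound_of_continuousOn
    (hu.continuousOn : ContinuousOn u (Set.Icc a b))
  obtain ⟨Mv, hMv⟩ := isCompact_Icc.exists_bound_of_continuousOn
    (hv.continuousOn : ContinuousOn v (Set.Icc a b))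
  refine Integrable.mono' (g := fun τ => (max Mu 0 * max Mv 0) * ‖C τ‖)
    (((hC.integrableOn_isCompact isCompact_Icc).mono_set
      Set.Ioc_subset_Icc_self).norm.const_mul _)
    ((sandwich_aesm hC hu hv).restrict) ?_
  rw [ae_restrict_iff' measurableSet_Ioc]
  refine Filter.Eventually.of_forall (fun τ hτ => ?_)
  have hτ' : τ ∈ Set.Icc a b := Set.Ioc_subset_Icc_self hτ
  have h1 : ‖u τ‖ ≤ max Mu 0 := le_trans (hMu τ hτ') (le_max_left _ _)
  have h2 : ‖v τ‖ ≤ max Mv 0 := le_trans (hMv τ hτ') (le_max_left _ _)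
  calc ‖(u τ).comp ((C τ).comp (v τ))‖ ≤ ‖u τ‖ * ‖C τ‖ * ‖v τ‖ := sandwich_norm_le _ _ _
  _ ≤ max Mu 0 * ‖C τ‖ * max Mv 0 :=
      mul_le_mul (mul_le_mul h1 le_rfl (norm_nonneg _) (le_max_right _ _)) h2
        (norm_nonneg _) (by positivity)
  _ = max Mu 0 * max Mv 0 * ‖C τ‖ := by ring

theorem sandwich_intervalIntegrable {C : ℝ → F →L[ℝ] E} (hC : LocallyIntegrable C volume)
    {u : ℝ → E →L[ℝ] E} {v : ℝ → F →L[ℝ] F} (hu : Continuous u) (hv : Continuous v)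
    (a b : ℝ) :
    IntervalIntegrable (fun τ => (u τ).comp ((C τ).comp (v τ))) volume a b :=
  ⟨sandwich_integrableOn_Ioc hC hu hv a b, sandwich_integrableOn_Ioc hC hu hv b a⟩

end AuxSandwich
section AuxTriangular
set_option synthInstance.maxHeartbeats 1000000
set_option maxHeartbeats 1000000
set_option linter.unusedSectionVars false

variable {E : Type*} [NormedAddCommGroup E] [NormedSpace ℝ E] [FiniteDimensional ℝ E]
variable {F : Type*} [NormedAddCommGroup F] [NormedSpace ℝ F] [FiniteDimensional ℝ F]

/-- The top-right block of the evolution operator of a block triangular system. -/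
def evolW (X : ℝ → ℝ → E →L[ℝ] E) (Y : ℝ → ℝ → F →L[ℝ] F) (C : ℝ → F →L[ℝ] E)
    (t s : ℝ) : F →L[ℝ] E :=
  ∫ τ in s..t, ((X t τ).comp ((C τ).comp (Y τ s)))

variable {A : ℝ → E →L[ℝ] E} {B : ℝ → F →L[ℝ] F} {C : ℝ → F →L[ℝ] E}
variable {X : ℝ → ℝ → E →L[ℝ] E} {Y : ℝ → ℝ → F →L[ℝ] F}
variable {T : ℝ → ℝ → (E × F) →L[ℝ] (E × F)}

theorem T_snd (hY : IsEvolution B Y)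
    (hT : IsEvolution (fun t => blockUpper (A t) (B t) (C t)) T) (s : ℝ) (z : E × F) (r : ℝ) :
    (T r s z).2 = Y r s z.2 := by
  have hd : ∀ τ, HasDerivAt (fun ρ => (T ρ s z).2) (B τ ((T τ s z).2)) τ := by
    intro τ
    have h1 := hT.2.2 s z τ
    have h2 := (ContinuousLinearMap.snd ℝ E F).hasFDerivAt.comp_hasDerivAt τ h1
    exact h2
  have h3 := evol_unique hY hd s r
  rw [h3, hT.1]
  rfl

theorem T_eq_block (hX : IsEvolution A X) (hY : IsEvolution B Y)
    (hC : LocallyIntegrable C volume)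
    (hT : IsEvolution (fun t => blockUpper (A t) (B t) (C t)) T) (t s : ℝ) :
    T t s = blockUpper (X t s) (Y t s) (evolW X Y C t s) := by
  apply ContinuousLinearMap.ext
  intro z
  set φ : ℝ → F →L[ℝ] E := fun τ => ((X t τ).comp ((C τ).comp (Y τ s))) with hφdef
  have hφint : IntervalIntegrable φ volume s t :=
    sandwich_intervalIntegrable hC (evol_cont_snd hX t) (evol_cont_fst hY s) s t
  set ξ : ℝ → E := fun ρ => (T ρ s z).1 with hξdef
  have hdξ : ∀ τ, HasDerivAt ξ (A τ (ξ τ) + C τ (Y τ s z.2)) τ := by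
    intro τ
    have h1 := hT.2.2 s z τ
    have h2 := (ContinuousLinearMap.fst ℝ E F).hasFDerivAt.comp_hasDerivAt τ h1
    have h3 : (ContinuousLinearMap.fst ℝ E F)
        ((fun t => blockUpper (A t) (B t) (C t)) τ (T τ s z)) = A τ (ξ τ) + C τ (Y τ s z.2) := by
      show (blockUpper (A τ) (B τ) (C τ) (T τ s z)).1 = _
      rw [blockUpper_apply]
      show A τ (ξ τ) + C τ ((T τ s z).2) = _
      rw [T_snd hY hT s z τ]
    rw [h3] at h2
    exact h2
  have hg : ∀ τ, HasDerivAt (fun ρ => X t ρ (ξ ρ)) (φ τ z.2) τ := by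
    intro τ
    have h1 := (evol_hasDerivAt_snd hX t τ).clm_apply (hdξ τ)
    have h2 : (-((X t τ).comp (A τ))) (ξ τ) + (X t τ) (A τ (ξ τ) + C τ (Y τ s z.2))
        = φ τ z.2 := by
      simp only [ContinuousLinearMap.neg_apply, ContinuousLinearMap.comp_apply, map_add, hφdef]
      abel
    rw [h2] at h1
    exact h1
  have hftc := intervalIntegral.integral_eq_sub_of_hasDerivAt
    (f := fun ρ => X t ρ (ξ ρ)) (f' := fun τ => φ τ z.2)
    (fun τ _ => hg τ) (intervalIntegrable_clm_apply hφint z.2)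
  have hXtt : X t t (ξ t) = ξ t := by rw [hX.1]; rfl
  have hξs : ξ s = z.1 := by rw [hξdef]; show (T s s z).1 = z.1; rw [hT.1]; rfl
  beta_reduce at hftc
  rw [hXtt, hξs] at hftc
  have hW : evolW X Y C t s z.2 = ∫ τ in s..t, φ τ z.2 :=
    intervalIntegral_clm_apply hφint z.2
  have hfst : ξ t = X t s z.1 + evolW X Y C t s z.2 := by
    rw [hW, hftc]
    abel
  rw [blockUpper_apply]
  exact Prod.ext hfst (T_snd hY hT s z t)

end AuxTriangular
section AuxProj
set_option synthInstance.maxHeartbeats 1000000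
set_option maxHeartbeats 1600000
set_option linter.unusedSectionVars false

variable {E : Type*} [NormedAddCommGroup E] [NormedSpace ℝ E] [FiniteDimensional ℝ E]
variable {F : Type*} [NormedAddCommGroup F] [NormedSpace ℝ F] [FiniteDimensional ℝ F]

/-- Extended projection family, defined by conjugation for all times. -/
def PAt (X : ℝ → ℝ → E →L[ℝ] E) (PA : ℝ → E →L[ℝ] E) (t : ℝ) : E →L[ℝ] E :=
  (X t 0).comp ((PA 0).comp (X 0 t))

def QAt (X : ℝ → ℝ → E →L[ℝ] E) (PA : ℝ → E →L[ℝ] E) (t : ℝ) : E →L[ℝ] E :=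
  ContinuousLinearMap.id ℝ E - PAt X PA t

variable {A : ℝ → E →L[ℝ] E} {B : ℝ → F →L[ℝ] F}
variable {X : ℝ → ℝ → E →L[ℝ] E} {Y : ℝ → ℝ → F →L[ℝ] F}
variable {PA : ℝ → E →L[ℝ] E} {PB : ℝ → F →L[ℝ] F}

theorem evol_apply_comp (hX : IsEvolution A X) (t r s : ℝ) (x : E) :
    X t r (X r s x) = X t s x := by
  rw [← ContinuousLinearMap.comp_apply, hX.2.1]

theorem ned_proj {K ε γ : ℝ} (h : NonuniformED X PA K ε γ) :
    ∀ t, 0 ≤ t → (PA t).comp (PA t) = PA t := h.2.2.2.1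

theorem ned_inv {K ε γ : ℝ} (h : NonuniformED X PA K ε γ) :
    ∀ t s, 0 ≤ t → 0 ≤ s → (X t s).comp (PA s) = (PA t).comp (X t s) := h.2.2.2.2.1

theorem ned_est1 {K ε γ : ℝ} (h : NonuniformED X PA K ε γ) :
    ∀ s t, 0 ≤ s → s ≤ t →
      ‖(X t s).comp (PA s)‖ ≤ K * Real.exp (-γ * (t - s)) * Real.exp (ε * s) :=
  h.2.2.2.2.2.1

theorem ned_est2 {K ε γ : ℝ} (h : NonuniformED X PA K ε γ) :
    ∀ t s, 0 ≤ t → t ≤ s →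
      ‖(X t s).comp (ContinuousLinearMap.id ℝ E - PA s)‖ ≤
        K * Real.exp (-γ * (s - t)) * Real.exp (ε * s) :=
  h.2.2.2.2.2.2

theorem PAt_cont (hX : IsEvolution A X) : Continuous (PAt X PA) := by
  exact (evol_cont_fst hX 0).clm_comp (continuous_const.clm_comp (evol_cont_snd hX 0))

theorem QAt_cont (hX : IsEvolution A X) : Continuous (QAt X PA) :=
  continuous_const.sub (PAt_cont hX)

theorem PAt_eq {K ε γ : ℝ} (hX : IsEvolution A X) (hd : NonuniformED X PA K ε γ)
    {t : ℝ} (ht : 0 ≤ t) : PAt X PA t = PA t := by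
  apply ContinuousLinearMap.ext
  intro x
  have h1 := ned_inv hd t 0 ht le_rfl
  have h2 : X t 0 (PA 0 (X 0 t x)) = PA t (X t 0 (X 0 t x)) := by
    have := congrArg (fun L : E →L[ℝ] E => L (X 0 t x)) h1
    simpa [ContinuousLinearMap.comp_apply] using this
  simp only [PAt, ContinuousLinearMap.comp_apply]
  rw [h2, evol_apply_inv_apply hX t 0]

theorem QAt_eq {K ε γ : ℝ} (hX : IsEvolution A X) (hd : NonuniformED X PA K ε γ)
    {t : ℝ} (ht : 0 ≤ t) : QAt X PA t = ContinuousLinearMap.id ℝ E - PA t := by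
  rw [QAt, PAt_eq hX hd ht]

theorem PAt_invar (hX : IsEvolution A X) (t s : ℝ) :
    (X t s).comp (PAt X PA s) = (PAt X PA t).comp (X t s) := by
  apply ContinuousLinearMap.ext
  intro x
  simp only [PAt, ContinuousLinearMap.comp_apply]
  rw [evol_apply_comp hX t s 0, evol_apply_comp hX 0 t s]

theorem QAt_invar (hX : IsEvolution A X) (t s : ℝ) :
    (X t s).comp (QAt X PA s) = (QAt X PA t).comp (X t s) := by
  simp only [QAt, ContinuousLinearMap.comp_sub, ContinuousLinearMap.sub_comp,
    ContinuousLinearMap.comp_id, ContinuousLinearMap.id_comp]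
  rw [PAt_invar hX]

theorem PAt_idem {K ε γ : ℝ} (hX : IsEvolution A X) (hd : NonuniformED X PA K ε γ) (t : ℝ) :
    (PAt X PA t).comp (PAt X PA t) = PAt X PA t := by
  apply ContinuousLinearMap.ext
  intro x
  simp only [PAt, ContinuousLinearMap.comp_apply]
  rw [evol_apply_inv_apply hX 0 t]
  have h1 : PA 0 (PA 0 (X 0 t x)) = PA 0 (X 0 t x) := by
    have := congrArg (fun L : E →L[ℝ] E => L (X 0 t x)) (ned_proj hd 0 le_rfl)
    simpa [ContinuousLinearMap.comp_apply] using this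
  rw [h1]

theorem PAt_QAt {K ε γ : ℝ} (hX : IsEvolution A X) (hd : NonuniformED X PA K ε γ) (t : ℝ) :
    (PAt X PA t).comp (QAt X PA t) = 0 := by
  simp only [QAt, ContinuousLinearMap.comp_sub, ContinuousLinearMap.comp_id,
    PAt_idem hX hd t, sub_self]

theorem QAt_PAt {K ε γ : ℝ} (hX : IsEvolution A X) (hd : NonuniformED X PA K ε γ) (t : ℝ) :
    (QAt X PA t).comp (PAt X PA t) = 0 := by
  simp only [QAt, ContinuousLinearMap.sub_comp, ContinuousLinearMap.id_comp,
    PAt_idem hX hd t, sub_self]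

theorem QAt_idem {K ε γ : ℝ} (hX : IsEvolution A X) (hd : NonuniformED X PA K ε γ) (t : ℝ) :
    (QAt X PA t).comp (QAt X PA t) = QAt X PA t := by
  simp only [QAt, ContinuousLinearMap.comp_sub, ContinuousLinearMap.sub_comp,
    ContinuousLinearMap.comp_id, ContinuousLinearMap.id_comp, PAt_idem hX hd t]
  abel

end AuxProj
section AuxGamma
set_option synthInstance.maxHeartbeats 1000000
set_option maxHeartbeats 1600000
set_option linter.unusedSectionVars false

variable {E : Type*} [NormedAddCommGroup E] [NormedSpace ℝ E] [FiniteDimensional ℝ E]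
variable {F : Type*} [NormedAddCommGroup F] [NormedSpace ℝ F] [FiniteDimensional ℝ F]
variable {A : ℝ → E →L[ℝ] E} {B : ℝ → F →L[ℝ] F}
variable {X : ℝ → ℝ → E →L[ℝ] E} {Y : ℝ → ℝ → F →L[ℝ] F}
variable {PA : ℝ → E →L[ℝ] E} {PB : ℝ → F →L[ℝ] F}

/-- `X(t,τ) ∘ G(τ) ∘ Y(τ,s)`. -/
def ggO (X : ℝ → ℝ → E →L[ℝ] E) (Y : ℝ → ℝ → F →L[ℝ] F) (G : ℝ → F →L[ℝ] E)
    (t s τ : ℝ) : F →L[ℝ] E :=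
  (X t τ).comp ((G τ).comp (Y τ s))

def G0op (X : ℝ → ℝ → E →L[ℝ] E) (Y : ℝ → ℝ → F →L[ℝ] F) (C : ℝ → F →L[ℝ] E)
    (PA : ℝ → E →L[ℝ] E) (PB : ℝ → F →L[ℝ] F) (τ : ℝ) : F →L[ℝ] E :=
  (PAt X PA τ).comp ((C τ).comp (PAt Y PB τ))

def G1op (X : ℝ → ℝ → E →L[ℝ] E) (Y : ℝ → ℝ → F →L[ℝ] F) (C : ℝ → F →L[ℝ] E)
    (PA : ℝ → E →L[ℝ] E) (PB : ℝ → F →L[ℝ] F) (τ : ℝ) : F →L[ℝ] E :=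
  (PAt X PA τ).comp ((C τ).comp (QAt Y PB τ))

def G2op (X : ℝ → ℝ → E →L[ℝ] E) (Y : ℝ → ℝ → F →L[ℝ] F) (C : ℝ → F →L[ℝ] E)
    (PA : ℝ → E →L[ℝ] E) (PB : ℝ → F →L[ℝ] F) (τ : ℝ) : F →L[ℝ] E :=
  (QAt X PA τ).comp ((C τ).comp (PAt Y PB τ))

def G3op (X : ℝ → ℝ → E →L[ℝ] E) (Y : ℝ → ℝ → F →L[ℝ] F) (C : ℝ → F →L[ℝ] E)
    (PA : ℝ → E →L[ℝ] E) (PB : ℝ → F →L[ℝ] F) (τ : ℝ) : F →L[ℝ] E :=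
  (QAt X PA τ).comp ((C τ).comp (QAt Y PB τ))

/-- The top-right block of the dichotomy projection. -/
def GammaOp (X : ℝ → ℝ → E →L[ℝ] E) (Y : ℝ → ℝ → F →L[ℝ] F) (C : ℝ → F →L[ℝ] E)
    (PA : ℝ → E →L[ℝ] E) (PB : ℝ → F →L[ℝ] F) (t : ℝ) : F →L[ℝ] E :=
  -(∫ τ in Set.Ioc 0 t, ggO X Y (G1op X Y C PA PB) t t τ) -
    ∫ τ in Set.Ioi t, ggO X Y (G2op X Y C PA PB) t t τ

/-- The dichotomy projection of the triangular system. -/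
def Pproj (X : ℝ → ℝ → E →L[ℝ] E) (Y : ℝ → ℝ → F →L[ℝ] F) (C : ℝ → F →L[ℝ] E)
    (PA : ℝ → E →L[ℝ] E) (PB : ℝ → F →L[ℝ] F) (t : ℝ) : (E × F) →L[ℝ] (E × F) :=
  blockUpper (PAt X PA t) (PAt Y PB t) (GammaOp X Y C PA PB t)

variable {C : ℝ → F →L[ℝ] E}

/- algebraic identities for `ggO` -/

theorem gg_compX (hX : IsEvolution A X) (G : ℝ → F →L[ℝ] E) (t s r τ : ℝ) :
    (X t s).comp (ggO X Y G s r τ) = ggO X Y G t r τ := by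
  apply ContinuousLinearMap.ext; intro x
  simp only [ggO, ContinuousLinearMap.comp_apply]
  rw [evol_apply_comp hX t s τ]

theorem gg_compY (hY : IsEvolution B Y) (G : ℝ → F →L[ℝ] E) (t s r τ : ℝ) :
    (ggO X Y G t s τ).comp (Y s r) = ggO X Y G t r τ := by
  apply ContinuousLinearMap.ext; intro x
  simp only [ggO, ContinuousLinearMap.comp_apply]
  rw [evol_apply_comp hY τ s r]

theorem gg_left_PAt (hX : IsEvolution A X) (G : ℝ → F →L[ℝ] E) (t s τ : ℝ) :
    (PAt X PA t).comp (ggO X Y G t s τ) =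
      ggO X Y (fun r => (PAt X PA r).comp (G r)) t s τ := by
  apply ContinuousLinearMap.ext; intro x
  simp only [ggO, ContinuousLinearMap.comp_apply]
  have h := congrArg (fun L : E →L[ℝ] E => L (G τ (Y τ s x))) (PAt_invar (PA := PA) hX t τ)
  simpa [ContinuousLinearMap.comp_apply] using h.symm

theorem gg_right_PBt (hY : IsEvolution B Y) (G : ℝ → F →L[ℝ] E) (t s τ : ℝ) :
    (ggO X Y G t s τ).comp (PAt Y PB s) =
      ggO X Y (fun r => (G r).comp (PAt Y PB r)) t s τ := by
  apply ContinuousLinearMap.ext; intro x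
  simp only [ggO, ContinuousLinearMap.comp_apply]
  have h : (Y τ s) ((PAt Y PB s) x) = (PAt Y PB τ) ((Y τ s) x) := by
    have h0 := congrArg (fun L : F →L[ℝ] F => L x) (PAt_invar (PA := PB) hY τ s)
    simpa [ContinuousLinearMap.comp_apply] using h0
  rw [h]

theorem gg_right_QBt (hY : IsEvolution B Y) (G : ℝ → F →L[ℝ] E) (t s τ : ℝ) :
    (ggO X Y G t s τ).comp (QAt Y PB s) =
      ggO X Y (fun r => (G r).comp (QAt Y PB r)) t s τ := by
  apply ContinuousLinearMap.ext; intro x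
  simp only [ggO, ContinuousLinearMap.comp_apply]
  have h : (Y τ s) ((QAt Y PB s) x) = (QAt Y PB τ) ((Y τ s) x) := by
    have h0 := congrArg (fun L : F →L[ℝ] F => L x) (QAt_invar (PA := PB) hY τ s)
    simpa [ContinuousLinearMap.comp_apply] using h0
  rw [h]

/- middle identities -/

theorem mid_PC (τ : ℝ) :
    (fun r => (C r).comp (PAt Y PB r)) τ = G0op X Y C PA PB τ + G2op X Y C PA PB τ := by
  simp only [G0op, G2op, QAt, ContinuousLinearMap.sub_comp, ContinuousLinearMap.id_comp]
  abel

theorem mid_CQ (τ : ℝ) :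
    (fun r => (C r).comp (QAt Y PB r)) τ = G1op X Y C PA PB τ + G3op X Y C PA PB τ := by
  simp only [G1op, G3op, QAt, ContinuousLinearMap.sub_comp, ContinuousLinearMap.id_comp]
  abel

theorem mid_PA_left (τ : ℝ) :
    (fun r => (PAt X PA r).comp (C r)) τ = G0op X Y C PA PB τ + G1op X Y C PA PB τ := by
  simp only [G0op, G1op, QAt, ContinuousLinearMap.comp_sub, ContinuousLinearMap.comp_id]
  abel

theorem mid_PAt_G1 {K ε γ : ℝ} (hX : IsEvolution A X) (hd : NonuniformED X PA K ε γ) (τ : ℝ) :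
    (PAt X PA τ).comp (G1op X Y C PA PB τ) = G1op X Y C PA PB τ := by
  rw [G1op, ← ContinuousLinearMap.comp_assoc, PAt_idem hX hd]

theorem mid_PAt_G2 {K ε γ : ℝ} (hX : IsEvolution A X) (hd : NonuniformED X PA K ε γ) (τ : ℝ) :
    (PAt X PA τ).comp (G2op X Y C PA PB τ) = 0 := by
  rw [G2op, ← ContinuousLinearMap.comp_assoc, PAt_QAt hX hd]
  rfl

theorem mid_G1_PBt {K ε γ : ℝ} (hY : IsEvolution B Y) (hd : NonuniformED Y PB K ε γ) (τ : ℝ) :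
    (G1op X Y C PA PB τ).comp (PAt Y PB τ) = 0 := by
  rw [G1op, ContinuousLinearMap.comp_assoc, ContinuousLinearMap.comp_assoc,
    QAt_PAt hY hd]
  simp

theorem mid_G2_PBt {K ε γ : ℝ} (hY : IsEvolution B Y) (hd : NonuniformED Y PB K ε γ) (τ : ℝ) :
    (G2op X Y C PA PB τ).comp (PAt Y PB τ) = G2op X Y C PA PB τ := by
  rw [G2op, ContinuousLinearMap.comp_assoc, ContinuousLinearMap.comp_assoc,
    PAt_idem hY hd]

end AuxGamma
section AuxGamma2
set_option synthInstance.maxHeartbeats 1000000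
set_option maxHeartbeats 1600000
set_option linter.unusedSectionVars false

variable {E : Type*} [NormedAddCommGroup E] [NormedSpace ℝ E] [FiniteDimensional ℝ E]
variable {F : Type*} [NormedAddCommGroup F] [NormedSpace ℝ F] [FiniteDimensional ℝ F]
variable {A : ℝ → E →L[ℝ] E} {B : ℝ → F →L[ℝ] F}
variable {X : ℝ → ℝ → E →L[ℝ] E} {Y : ℝ → ℝ → F →L[ℝ] F}
variable {PA : ℝ → E →L[ℝ] E} {PB : ℝ → F →L[ℝ] F}
variable {C : ℝ → F →L[ℝ] E}

theorem ggO_mid_integrableOn_Ioc (hX : IsEvolution A X) (hY : IsEvolution B Y)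
    (hC : LocallyIntegrable C volume) {uM : ℝ → E →L[ℝ] E} {vM : ℝ → F →L[ℝ] F}
    (huM : Continuous uM) (hvM : Continuous vM) (t s a b : ℝ) :
    IntegrableOn (fun τ => ggO X Y (fun r => (uM r).comp ((C r).comp (vM r))) t s τ)
      (Set.Ioc a b) volume := by
  have h := sandwich_integrableOn_Ioc hC ((evol_cont_snd hX t).clm_comp huM)
    (hvM.clm_comp (evol_cont_fst hY s)) a b
  refine h.congr (Filter.Eventually.of_forall fun τ => ?_)
  simp only [ggO, ContinuousLinearMap.comp_assoc]

theorem ggO_mid_aesm (hX : IsEvolution A X) (hY : IsEvolution B Y)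
    (hC : LocallyIntegrable C volume) {uM : ℝ → E →L[ℝ] E} {vM : ℝ → F →L[ℝ] F}
    (huM : Continuous uM) (hvM : Continuous vM) (t s : ℝ) :
    AEStronglyMeasurable (fun τ => ggO X Y (fun r => (uM r).comp ((C r).comp (vM r))) t s τ)
      volume := by
  have h := sandwich_aesm hC ((evol_cont_snd hX t).clm_comp huM)
    (hvM.clm_comp (evol_cont_fst hY s))
  refine h.congr (Filter.Eventually.of_forall fun τ => ?_)
  simp only [ggO, ContinuousLinearMap.comp_assoc]

theorem intI_C_Ioc (hX : IsEvolution A X) (hY : IsEvolution B Y)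
    (hC : LocallyIntegrable C volume) (t s a b : ℝ) :
    IntegrableOn (fun τ => ggO X Y C t s τ) (Set.Ioc a b) volume :=
  sandwich_integrableOn_Ioc hC (evol_cont_snd hX t) (evol_cont_fst hY s) a b

theorem intI_G0_Ioc (hX : IsEvolution A X) (hY : IsEvolution B Y)
    (hC : LocallyIntegrable C volume) (t s a b : ℝ) :
    IntegrableOn (fun τ => ggO X Y (G0op X Y C PA PB) t s τ) (Set.Ioc a b) volume :=
  ggO_mid_integrableOn_Ioc hX hY hC (PAt_cont hX) (PAt_cont hY) t s a b

theorem intI_G1_Ioc (hX : IsEvolution A X) (hY : IsEvolution B Y)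
    (hC : LocallyIntegrable C volume) (t s a b : ℝ) :
    IntegrableOn (fun τ => ggO X Y (G1op X Y C PA PB) t s τ) (Set.Ioc a b) volume :=
  ggO_mid_integrableOn_Ioc hX hY hC (PAt_cont hX) (QAt_cont hY) t s a b

theorem intI_G2_Ioc (hX : IsEvolution A X) (hY : IsEvolution B Y)
    (hC : LocallyIntegrable C volume) (t s a b : ℝ) :
    IntegrableOn (fun τ => ggO X Y (G2op X Y C PA PB) t s τ) (Set.Ioc a b) volume :=
  ggO_mid_integrableOn_Ioc hX hY hC (QAt_cont hX) (PAt_cont hY) t s a b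

theorem intI_G3_Ioc (hX : IsEvolution A X) (hY : IsEvolution B Y)
    (hC : LocallyIntegrable C volume) (t s a b : ℝ) :
    IntegrableOn (fun τ => ggO X Y (G3op X Y C PA PB) t s τ) (Set.Ioc a b) volume :=
  ggO_mid_integrableOn_Ioc hX hY hC (QAt_cont hX) (QAt_cont hY) t s a b

theorem II_of_Ioc {V : Type*} [NormedAddCommGroup V] {f : ℝ → V}
    (h : ∀ a b : ℝ, IntegrableOn f (Set.Ioc a b) volume) (a b : ℝ) :
    IntervalIntegrable f volume a b := ⟨h a b, h b a⟩

theorem intI_G2_Ioi (hX : IsEvolution A X) (hY : IsEvolution B Y)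
    (hC : LocallyIntegrable C volume) {K ε α Kt εt αt θ cC' : ℝ}
    (hdX : NonuniformED X PA K ε α) (hdY : NonuniformED Y PB Kt εt αt)
    (hCn : ∀ τ, 0 ≤ τ → ‖C τ‖ ≤ cC' * Real.exp (θ * τ))
    (hρ : 0 < α + αt - ε - θ)
    {t s a : ℝ} (ht : 0 ≤ t) (hs : 0 ≤ s) (ha : 0 ≤ a) :
    IntegrableOn (fun τ => ggO X Y (G2op X Y C PA PB) t s τ) (Set.Ioi a) volume := by
  set R := max a (max t s) with hR
  have haR : a ≤ R := le_max_left _ _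
  have htR : t ≤ R := le_trans (le_max_left t s) (le_max_right _ _)
  have hsR : s ≤ R := le_trans (le_max_right t s) (le_max_right _ _)
  set Cb := K * cC' * Kt * Real.exp (α * t + αt * s + εt * s) with hCbdef
  have key : IntegrableOn (fun τ => ggO X Y (G2op X Y C PA PB) t s τ) (Set.Ioi R) volume := by
    refine Integrable.mono' (g := fun τ => Cb * Real.exp (-(α + αt - ε - θ) * τ)) ?_ ?_ ?_
    · exact (exp_neg_integrableOn_Ioi R hρ).const_mul Cb
    · exact (ggO_mid_aesm hX hY hC (QAt_cont hX) (PAt_cont hY) t s).restrict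
    · rw [ae_restrict_iff' measurableSet_Ioi]
      refine Filter.Eventually.of_forall (fun τ hτ => ?_)
      have hτR : R < τ := hτ
      have hτt : t ≤ τ := le_trans htR hτR.le
      have hτs : s ≤ τ := le_trans hsR hτR.le
      have hτ0 : 0 ≤ τ := le_trans (le_trans ha haR) hτR.le
      show ‖ggO X Y (G2op X Y C PA PB) t s τ‖ ≤ Cb * Real.exp (-(α + αt - ε - θ) * τ)
      have hform : ggO X Y (G2op X Y C PA PB) t s τ
          = ((X t τ).comp (QAt X PA τ)).comp ((C τ).comp ((PAt Y PB τ).comp (Y τ s))) := by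
        simp only [ggO, G2op, ContinuousLinearMap.comp_assoc]
      have hXb : ‖(X t τ).comp (QAt X PA τ)‖
          ≤ K * Real.exp (-α * (τ - t)) * Real.exp (ε * τ) := by
        rw [QAt_eq hX hdX hτ0]
        exact ned_est2 hdX t τ ht hτt
      have hYb : ‖(PAt Y PB τ).comp (Y τ s)‖
          ≤ Kt * Real.exp (-αt * (τ - s)) * Real.exp (εt * s) := by
        rw [← PAt_invar hY τ s, PAt_eq hY hdY hs]
        exact ned_est1 hdY s τ hs hτs
      have hCb2 : ‖C τ‖ ≤ cC' * Real.exp (θ * τ) := hCn τ hτ0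
      have hK : 0 ≤ K := le_trans zero_le_one hdX.1
      have hcC' : 0 ≤ cC' := by
        have h0 := le_trans (norm_nonneg (C R)) (hCn R (le_trans ha haR))
        nlinarith [Real.exp_pos (θ * R)]
      rw [hform]
      calc ‖((X t τ).comp (QAt X PA τ)).comp ((C τ).comp ((PAt Y PB τ).comp (Y τ s)))‖
          ≤ ‖(X t τ).comp (QAt X PA τ)‖ * ‖C τ‖ * ‖(PAt Y PB τ).comp (Y τ s)‖ :=
            sandwich_norm_le _ _ _
      _ ≤ (K * Real.exp (-α * (τ - t)) * Real.exp (ε * τ)) * (cC' * Real.exp (θ * τ))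
            * (Kt * Real.exp (-αt * (τ - s)) * Real.exp (εt * s)) := by
            refine mul_le_mul (mul_le_mul hXb hCb2 (norm_nonneg _) ?_) hYb (norm_nonneg _) ?_
            · positivity
            · have h1 : (0:ℝ) ≤ K * Real.exp (-α * (τ - t)) * Real.exp (ε * τ) := by positivity
              have h2 : (0:ℝ) ≤ cC' * Real.exp (θ * τ) := by positivity
              exact mul_nonneg h1 h2
      _ = Cb * Real.exp (-(α + αt - ε - θ) * τ) := by
            rw [hCbdef]
            rw [show (K * Real.exp (-α * (τ - t)) * Real.exp (ε * τ)) * (cC' * Real.exp (θ * τ))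
                * (Kt * Real.exp (-αt * (τ - s)) * Real.exp (εt * s))
                = K * cC' * Kt *
                  Real.exp (-α * (τ - t) + ε * τ + θ * τ + -αt * (τ - s) + εt * s) from by
              rw [Real.exp_add, Real.exp_add, Real.exp_add, Real.exp_add]; ring]
            rw [mul_assoc (K * cC' * Kt), ← Real.exp_add]
            congr 1
            ring
  have hsplit : Set.Ioi a = Set.Ioc a R ∪ Set.Ioi R := (Set.Ioc_union_Ioi_eq_Ioi haR).symm
  rw [hsplit]
  exact (intI_G2_Ioc hX hY hC t s a R).union key

theorem split_Ioc {V : Type*} [NormedAddCommGroup V] [NormedSpace ℝ V] [CompleteSpace V]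
    {f : ℝ → V} (hf : ∀ a b : ℝ, IntegrableOn f (Set.Ioc a b) volume)
    {s t : ℝ} (hs : 0 ≤ s) (ht : 0 ≤ t) :
    (∫ τ in Set.Ioc 0 t, f τ) - (∫ τ in Set.Ioc 0 s, f τ) = ∫ τ in s..t, f τ := by
  rw [← intervalIntegral.integral_of_le ht, ← intervalIntegral.integral_of_le hs]
  exact intervalIntegral.integral_interval_sub_left ⟨hf 0 t, hf t 0⟩ ⟨hf 0 s, hf s 0⟩

theorem split_Ioi {V : Type*} [NormedAddCommGroup V] [NormedSpace ℝ V] [CompleteSpace V]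
    {f : ℝ → V} (hIoc : ∀ a b : ℝ, IntegrableOn f (Set.Ioc a b) volume)
    {s t : ℝ} (hIoi : IntegrableOn f (Set.Ioi (min s t)) volume) :
    (∫ τ in Set.Ioi s, f τ) - (∫ τ in Set.Ioi t, f τ) = ∫ τ in s..t, f τ := by
  rcases le_total s t with hst | hst
  · rw [min_eq_left hst] at hIoi
    have hd : Disjoint (Set.Ioc s t) (Set.Ioi t) := by
      rw [Set.disjoint_left]
      rintro x hx1 hx2
      exact absurd hx1.2 (not_le.2 hx2)
    have h1 := setIntegral_union hd measurableSet_Ioi (hIoc s t)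
      (hIoi.mono_set (Set.Ioi_subset_Ioi hst))
    rw [Set.Ioc_union_Ioi_eq_Ioi hst] at h1
    rw [h1, intervalIntegral.integral_of_le hst]
    abel
  · rw [min_eq_right hst] at hIoi
    have hd : Disjoint (Set.Ioc t s) (Set.Ioi s) := by
      rw [Set.disjoint_left]
      rintro x hx1 hx2
      exact absurd hx1.2 (not_le.2 hx2)
    have h1 := setIntegral_union hd measurableSet_Ioi (hIoc t s)
      (hIoi.mono_set (Set.Ioi_subset_Ioi hst))
    rw [Set.Ioc_union_Ioi_eq_Ioi hst] at h1
    rw [h1, intervalIntegral.integral_symm, intervalIntegral.integral_of_le hst]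
    abel

end AuxGamma2
section AuxGamma3
set_option synthInstance.maxHeartbeats 1000000
set_option maxHeartbeats 1600000
set_option linter.unusedSectionVars false

variable {E : Type*} [NormedAddCommGroup E] [NormedSpace ℝ E] [FiniteDimensional ℝ E]
variable {F : Type*} [NormedAddCommGroup F] [NormedSpace ℝ F] [FiniteDimensional ℝ F]
variable {A : ℝ → E →L[ℝ] E} {B : ℝ → F →L[ℝ] F}
variable {X : ℝ → ℝ → E →L[ℝ] E} {Y : ℝ → ℝ → F →L[ℝ] F}
variable {PA : ℝ → E →L[ℝ] E} {PB : ℝ → F →L[ℝ] F}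
variable {C : ℝ → F →L[ℝ] E}

theorem ggO_zero (t s τ : ℝ) :
    ggO X Y (fun _ => (0 : F →L[ℝ] E)) t s τ = 0 := by simp [ggO]

theorem ggO_add (G G' : ℝ → F →L[ℝ] E) (t s τ : ℝ) :
    ggO X Y (fun r => G r + G' r) t s τ = ggO X Y G t s τ + ggO X Y G' t s τ := by
  simp [ggO, ContinuousLinearMap.add_comp, ContinuousLinearMap.comp_add]

theorem Gamma_comp_Y (hX : IsEvolution A X) (hY : IsEvolution B Y)
    (hC : LocallyIntegrable C volume)
    (hI2 : ∀ t' s' a : ℝ, 0 ≤ t' → 0 ≤ s' → 0 ≤ a →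
      IntegrableOn (fun τ => ggO X Y (G2op X Y C PA PB) t' s' τ) (Set.Ioi a) volume)
    {t : ℝ} (ht : 0 ≤ t) (s : ℝ) :
    (GammaOp X Y C PA PB t).comp (Y t s) =
      -(∫ τ in Set.Ioc 0 t, ggO X Y (G1op X Y C PA PB) t s τ) -
        ∫ τ in Set.Ioi t, ggO X Y (G2op X Y C PA PB) t s τ := by
  unfold GammaOp
  rw [ContinuousLinearMap.sub_comp, ContinuousLinearMap.neg_comp]
  rw [integral_clm_comp_right (Y t s) (intI_G1_Ioc hX hY hC t t 0 t)]
  rw [integral_clm_comp_right (Y t s) (hI2 t t t ht ht ht)]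
  rw [show (fun τ => (ggO X Y (G1op X Y C PA PB) t t τ).comp (Y t s))
      = fun τ => ggO X Y (G1op X Y C PA PB) t s τ from
    funext fun τ => gg_compY hY _ t t s τ]
  rw [show (fun τ => (ggO X Y (G2op X Y C PA PB) t t τ).comp (Y t s))
      = fun τ => ggO X Y (G2op X Y C PA PB) t s τ from
    funext fun τ => gg_compY hY _ t t s τ]

theorem X_comp_Gamma (hX : IsEvolution A X) (hY : IsEvolution B Y)
    (hC : LocallyIntegrable C volume)
    (hI2 : ∀ t' s' a : ℝ, 0 ≤ t' → 0 ≤ s' → 0 ≤ a →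
      IntegrableOn (fun τ => ggO X Y (G2op X Y C PA PB) t' s' τ) (Set.Ioi a) volume)
    {s : ℝ} (hs : 0 ≤ s) (t : ℝ) :
    (X t s).comp (GammaOp X Y C PA PB s) =
      -(∫ τ in Set.Ioc 0 s, ggO X Y (G1op X Y C PA PB) t s τ) -
        ∫ τ in Set.Ioi s, ggO X Y (G2op X Y C PA PB) t s τ := by
  unfold GammaOp
  rw [ContinuousLinearMap.comp_sub, ContinuousLinearMap.comp_neg]
  rw [integral_clm_comp_left (X t s) (intI_G1_Ioc hX hY hC s s 0 s)]
  rw [integral_clm_comp_left (X t s) (hI2 s s s hs hs hs)]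
  rw [show (fun τ => (X t s).comp (ggO X Y (G1op X Y C PA PB) s s τ))
      = fun τ => ggO X Y (G1op X Y C PA PB) t s τ from
    funext fun τ => gg_compX hX _ t s s τ]
  rw [show (fun τ => (X t s).comp (ggO X Y (G2op X Y C PA PB) s s τ))
      = fun τ => ggO X Y (G2op X Y C PA PB) t s τ from
    funext fun τ => gg_compX hX _ t s s τ]

theorem W_comp_PBt (hX : IsEvolution A X) (hY : IsEvolution B Y)
    (hC : LocallyIntegrable C volume) (t s : ℝ) :
    (evolW X Y C t s).comp (PAt Y PB s) =
      (∫ τ in s..t, ggO X Y (G0op X Y C PA PB) t s τ) +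
        ∫ τ in s..t, ggO X Y (G2op X Y C PA PB) t s τ := by
  have hW : evolW X Y C t s = ∫ τ in s..t, ggO X Y C t s τ := rfl
  rw [hW, intervalIntegral_clm_comp_right _ (II_of_Ioc (intI_C_Ioc hX hY hC t s) s t)]
  rw [show (fun τ => (ggO X Y C t s τ).comp (PAt Y PB s))
      = fun τ => ggO X Y (G0op X Y C PA PB) t s τ + ggO X Y (G2op X Y C PA PB) t s τ from
    funext fun τ => by
      rw [gg_right_PBt hY C t s τ,
        show (fun r => (C r).comp (PAt Y PB r))
          = fun r => G0op X Y C PA PB r + G2op X Y C PA PB r from funext fun r => mid_PC r,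
        ggO_add]]
  exact intervalIntegral.integral_add (II_of_Ioc (intI_G0_Ioc hX hY hC t s) s t)
    (II_of_Ioc (intI_G2_Ioc hX hY hC t s) s t)

theorem W_comp_QBt (hX : IsEvolution A X) (hY : IsEvolution B Y)
    (hC : LocallyIntegrable C volume) (t s : ℝ) :
    (evolW X Y C t s).comp (QAt Y PB s) =
      (∫ τ in s..t, ggO X Y (G1op X Y C PA PB) t s τ) +
        ∫ τ in s..t, ggO X Y (G3op X Y C PA PB) t s τ := by
  have hW : evolW X Y C t s = ∫ τ in s..t, ggO X Y C t s τ := rfl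
  rw [hW, intervalIntegral_clm_comp_right _ (II_of_Ioc (intI_C_Ioc hX hY hC t s) s t)]
  rw [show (fun τ => (ggO X Y C t s τ).comp (QAt Y PB s))
      = fun τ => ggO X Y (G1op X Y C PA PB) t s τ + ggO X Y (G3op X Y C PA PB) t s τ from
    funext fun τ => by
      rw [gg_right_QBt hY C t s τ,
        show (fun r => (C r).comp (QAt Y PB r))
          = fun r => G1op X Y C PA PB r + G3op X Y C PA PB r from funext fun r => mid_CQ r,
        ggO_add]]
  exact intervalIntegral.integral_add (II_of_Ioc (intI_G1_Ioc hX hY hC t s) s t)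
    (II_of_Ioc (intI_G3_Ioc hX hY hC t s) s t)

theorem PAt_comp_W (hX : IsEvolution A X) (hY : IsEvolution B Y)
    (hC : LocallyIntegrable C volume) (t s : ℝ) :
    (PAt X PA t).comp (evolW X Y C t s) =
      (∫ τ in s..t, ggO X Y (G0op X Y C PA PB) t s τ) +
        ∫ τ in s..t, ggO X Y (G1op X Y C PA PB) t s τ := by
  have hW : evolW X Y C t s = ∫ τ in s..t, ggO X Y C t s τ := rfl
  rw [hW, intervalIntegral_clm_comp_left _ (II_of_Ioc (intI_C_Ioc hX hY hC t s) s t)]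
  rw [show (fun τ => (PAt X PA t).comp (ggO X Y C t s τ))
      = fun τ => ggO X Y (G0op X Y C PA PB) t s τ + ggO X Y (G1op X Y C PA PB) t s τ from
    funext fun τ => by
      rw [gg_left_PAt hX C t s τ,
        show (fun r => (PAt X PA r).comp (C r))
          = fun r => G0op X Y C PA PB r + G1op X Y C PA PB r from funext fun r => mid_PA_left r,
        ggO_add]]
  exact intervalIntegral.integral_add (II_of_Ioc (intI_G0_Ioc hX hY hC t s) s t)
    (II_of_Ioc (intI_G1_Ioc hX hY hC t s) s t)

/-- The key invariance identity for the top-right block. -/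
theorem topright_invar (hX : IsEvolution A X) (hY : IsEvolution B Y)
    (hC : LocallyIntegrable C volume)
    (hI2 : ∀ t' s' a : ℝ, 0 ≤ t' → 0 ≤ s' → 0 ≤ a →
      IntegrableOn (fun τ => ggO X Y (G2op X Y C PA PB) t' s' τ) (Set.Ioi a) volume)
    {t s : ℝ} (ht : 0 ≤ t) (hs : 0 ≤ s) :
    (X t s).comp (GammaOp X Y C PA PB s) + (evolW X Y C t s).comp (PAt Y PB s) =
      (PAt X PA t).comp (evolW X Y C t s) + (GammaOp X Y C PA PB t).comp (Y t s) := by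
  rw [X_comp_Gamma hX hY hC hI2 hs t, W_comp_PBt hX hY hC t s,
    PAt_comp_W hX hY hC t s, Gamma_comp_Y hX hY hC hI2 ht s]
  have hs1 := split_Ioc (f := fun τ => ggO X Y (G1op X Y C PA PB) t s τ)
    (intI_G1_Ioc hX hY hC t s) hs ht
  have hs2 := split_Ioi (f := fun τ => ggO X Y (G2op X Y C PA PB) t s τ)
    (intI_G2_Ioc hX hY hC t s) (hI2 t s (min s t) ht hs (le_min hs ht))
  rw [← hs1, ← hs2]
  abel

theorem Pproj_invar (hX : IsEvolution A X) (hY : IsEvolution B Y)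
    (hC : LocallyIntegrable C volume)
    (hI2 : ∀ t' s' a : ℝ, 0 ≤ t' → 0 ≤ s' → 0 ≤ a →
      IntegrableOn (fun τ => ggO X Y (G2op X Y C PA PB) t' s' τ) (Set.Ioi a) volume)
    {t s : ℝ} (ht : 0 ≤ t) (hs : 0 ≤ s) :
    (blockUpper (X t s) (Y t s) (evolW X Y C t s)).comp (Pproj X Y C PA PB s) =
      (Pproj X Y C PA PB t).comp (blockUpper (X t s) (Y t s) (evolW X Y C t s)) := by
  unfold Pproj
  rw [blockUpper_comp, blockUpper_comp, PAt_invar hX, PAt_invar hY,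
    topright_invar hX hY hC hI2 ht hs]

theorem Gamma_proj_sum {K ε α Kt εt αt : ℝ} (hX : IsEvolution A X) (hY : IsEvolution B Y)
    (hC : LocallyIntegrable C volume)
    (hdX : NonuniformED X PA K ε α) (hdY : NonuniformED Y PB Kt εt αt)
    (hI2 : ∀ t' s' a : ℝ, 0 ≤ t' → 0 ≤ s' → 0 ≤ a →
      IntegrableOn (fun τ => ggO X Y (G2op X Y C PA PB) t' s' τ) (Set.Ioi a) volume)
    {t : ℝ} (ht : 0 ≤ t) :
    (PAt X PA t).comp (GammaOp X Y C PA PB t) +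
      (GammaOp X Y C PA PB t).comp (PAt Y PB t) = GammaOp X Y C PA PB t := by
  have h1 : (PAt X PA t).comp (GammaOp X Y C PA PB t) =
      -(∫ τ in Set.Ioc 0 t, ggO X Y (G1op X Y C PA PB) t t τ) := by
    unfold GammaOp
    rw [ContinuousLinearMap.comp_sub, ContinuousLinearMap.comp_neg]
    rw [integral_clm_comp_left _ (intI_G1_Ioc hX hY hC t t 0 t),
      integral_clm_comp_left _ (hI2 t t t ht ht ht)]
    rw [show (fun τ => (PAt X PA t).comp (ggO X Y (G1op X Y C PA PB) t t τ))
        = fun τ => ggO X Y (G1op X Y C PA PB) t t τ from funext fun τ => by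
      rw [gg_left_PAt hX _ t t τ,
        show (fun r => (PAt X PA r).comp (G1op X Y C PA PB r)) = G1op X Y C PA PB from
          funext fun r => mid_PAt_G1 hX hdX r]]
    rw [show (fun τ => (PAt X PA t).comp (ggO X Y (G2op X Y C PA PB) t t τ))
        = fun τ => (0 : F →L[ℝ] E) from funext fun τ => by
      rw [gg_left_PAt hX _ t t τ,
        show (fun r => (PAt X PA r).comp (G2op X Y C PA PB r)) = fun _ => (0 : F →L[ℝ] E) from
          funext fun r => mid_PAt_G2 hX hdX r,
        ggO_zero]]
    simp
  have h2 : (GammaOp X Y C PA PB t).comp (PAt Y PB t) =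
      -(∫ τ in Set.Ioi t, ggO X Y (G2op X Y C PA PB) t t τ) := by
    unfold GammaOp
    rw [ContinuousLinearMap.sub_comp, ContinuousLinearMap.neg_comp]
    rw [integral_clm_comp_right _ (intI_G1_Ioc hX hY hC t t 0 t),
      integral_clm_comp_right _ (hI2 t t t ht ht ht)]
    rw [show (fun τ => (ggO X Y (G1op X Y C PA PB) t t τ).comp (PAt Y PB t))
        = fun τ => (0 : F →L[ℝ] E) from funext fun τ => by
      rw [gg_right_PBt hY _ t t τ,
        show (fun r => (G1op X Y C PA PB r).comp (PAt Y PB r)) = fun _ => (0 : F →L[ℝ] E) from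
          funext fun r => mid_G1_PBt hY hdY r,
        ggO_zero]]
    rw [show (fun τ => (ggO X Y (G2op X Y C PA PB) t t τ).comp (PAt Y PB t))
        = fun τ => ggO X Y (G2op X Y C PA PB) t t τ from funext fun τ => by
      rw [gg_right_PBt hY _ t t τ,
        show (fun r => (G2op X Y C PA PB r).comp (PAt Y PB r)) = G2op X Y C PA PB from
          funext fun r => mid_G2_PBt hY hdY r]]
    simp
  rw [h1, h2]
  unfold GammaOp
  abel

theorem Pproj_idem {K ε α Kt εt αt : ℝ} (hX : IsEvolution A X) (hY : IsEvolution B Y)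
    (hC : LocallyIntegrable C volume)
    (hdX : NonuniformED X PA K ε α) (hdY : NonuniformED Y PB Kt εt αt)
    (hI2 : ∀ t' s' a : ℝ, 0 ≤ t' → 0 ≤ s' → 0 ≤ a →
      IntegrableOn (fun τ => ggO X Y (G2op X Y C PA PB) t' s' τ) (Set.Ioi a) volume)
    {t : ℝ} (ht : 0 ≤ t) :
    (Pproj X Y C PA PB t).comp (Pproj X Y C PA PB t) = Pproj X Y C PA PB t := by
  unfold Pproj
  rw [blockUpper_comp, PAt_idem hX hdX, PAt_idem hY hdY,
    Gamma_proj_sum hX hY hC hdX hdY hI2 ht]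

end AuxGamma3
section AuxEstTools
set_option synthInstance.maxHeartbeats 1000000
set_option maxHeartbeats 1600000
set_option linter.unusedSectionVars false

/-- Elementary exponential integral over `Ioc 0 s`. -/
theorem EIoc {ρ s : ℝ} (hρ : 0 < ρ) (hs : 0 ≤ s) :
    ∫ τ in Set.Ioc 0 s, Real.exp (ρ * τ - ρ * s) ≤ 1 / ρ := by
  rw [← intervalIntegral.integral_of_le hs]
  have hderiv : ∀ τ ∈ Set.uIcc (0:ℝ) s,
      HasDerivAt (fun τ => Real.exp (ρ * τ - ρ * s) / ρ) (Real.exp (ρ * τ - ρ * s)) τ := by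
    intro τ _
    have h1 : HasDerivAt (fun τ : ℝ => ρ * τ - ρ * s) ρ τ := by
      simpa using ((hasDerivAt_id τ).const_mul ρ).sub_const (ρ * s)
    have h2 := h1.exp.div_const ρ
    simpa [mul_div_assoc, mul_div_cancel_right₀, hρ.ne'] using h2
  have hint : IntervalIntegrable (fun τ => Real.exp (ρ * τ - ρ * s)) volume 0 s :=
    (Real.continuous_exp.comp (by continuity)).intervalIntegrable 0 s
  rw [intervalIntegral.integral_eq_sub_of_hasDerivAt hderiv hint]
  have h3 : 0 < Real.exp (ρ * 0 - ρ * s) / ρ := by positivity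
  have h4 : Real.exp (ρ * s - ρ * s) = 1 := by simp
  rw [h4]
  linarith [h3]

theorem EIoi_integrable {ρ t : ℝ} (hρ : 0 < ρ) :
    IntegrableOn (fun τ => Real.exp (ρ * t - ρ * τ)) (Set.Ioi t) volume := by
  refine ((exp_neg_integrableOn_Ioi t hρ).const_mul (Real.exp (ρ * t))).congr
    (Filter.Eventually.of_forall fun τ => ?_)
  show Real.exp (ρ * t) * Real.exp (-ρ * τ) = Real.exp (ρ * t - ρ * τ)
  rw [← Real.exp_add]
  congr 1
  ring

/-- Elementary exponential integral over `Ioi t`. -/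
theorem EIoi {ρ t : ℝ} (hρ : 0 < ρ) :
    ∫ τ in Set.Ioi t, Real.exp (ρ * t - ρ * τ) ≤ 1 / ρ := by
  have hcont : Continuous (fun τ : ℝ => -(Real.exp (ρ * t - ρ * τ) / ρ)) := by
    exact ((Real.continuous_exp.comp (by continuity)).div_const ρ).neg
  have hderiv : ∀ τ ∈ Set.Ioi t,
      HasDerivAt (fun τ => -(Real.exp (ρ * t - ρ * τ) / ρ)) (Real.exp (ρ * t - ρ * τ)) τ := by
    intro τ _
    have h1 : HasDerivAt (fun τ : ℝ => ρ * t - ρ * τ) (-ρ) τ := by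
      simpa using (((hasDerivAt_id τ).const_mul ρ).const_sub (ρ * t))
    have h2 := (h1.exp.div_const ρ).neg
    have h3 : -(Real.exp (ρ * t - ρ * τ) * -ρ / ρ) = Real.exp (ρ * t - ρ * τ) := by
      field_simp
    rwa [h3] at h2
  have htend : Filter.Tendsto (fun τ : ℝ => -(Real.exp (ρ * t - ρ * τ) / ρ))
      Filter.atTop (nhds 0) := by
    have h1 : Filter.Tendsto (fun τ : ℝ => ρ * t - ρ * τ) Filter.atTop Filter.atBot := by
      have h0 : Filter.Tendsto (fun τ : ℝ => -(ρ * τ)) Filter.atTop Filter.atBot :=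
        Filter.tendsto_neg_atTop_atBot.comp (Filter.tendsto_id.const_mul_atTop hρ)
      have := Filter.tendsto_atBot_add_const_left Filter.atTop (ρ * t) h0
      simpa [sub_eq_add_neg] using this
    have h2 : Filter.Tendsto (fun τ : ℝ => Real.exp (ρ * t - ρ * τ)) Filter.atTop (nhds 0) :=
      Real.tendsto_exp_atBot.comp h1
    have h3 := (h2.div_const ρ).neg
    simpa using h3
  have heq := integral_Ioi_of_hasDerivAt_of_tendsto hcont.continuousWithinAt hderiv
    (EIoi_integrable hρ) htend
  rw [heq, show ρ * t - ρ * t = 0 from by ring]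
  simp

theorem normfam_comp_integrable {V : Type*} [NormedAddCommGroup V] [NormedSpace ℝ V]
    {X' : Type*} [MeasurableSpace X'] {μ : MeasureTheory.Measure X'} (N : V → ℝ)
    (hadd : ∀ x y, N (x + y) ≤ N x + N y) (hsmul : ∀ (c : ℝ) x, N (c • x) = |c| * N x)
    {cN : ℝ} (hN : ∀ x, N x ≤ cN * ‖x‖) {f : X' → V} (hf : Integrable f μ) :
    Integrable (fun τ => N (f τ)) μ := by
  have hN0 : N 0 = 0 := by simpa using hsmul 0 0
  have hneg : ∀ x, N (-x) = N x := fun x => by simpa using hsmul (-1) x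
  have hnonneg : ∀ x, 0 ≤ N x := by
    intro x
    have h1 : N 0 ≤ N x + N (-x) := by simpa using hadd x (-x)
    rw [hN0, hneg] at h1
    linarith
  have hN' : ∀ x, N x ≤ |cN| * ‖x‖ := fun x =>
    le_trans (hN x) (mul_le_mul_of_nonneg_right (le_abs_self cN) (norm_nonneg _))
  have hcont : Continuous N := by
    refine (LipschitzWith.of_dist_le_mul (K := Real.toNNReal |cN|) (f := N) ?_).continuous
    intro x y
    rw [Real.coe_toNNReal _ (abs_nonneg cN), Real.dist_eq, dist_eq_norm]
    rw [abs_sub_le_iff]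
    constructor
    · have h1 : N x ≤ N (x - y) + N y := by simpa [sub_add_cancel] using hadd (x - y) y
      have := hN' (x - y)
      linarith
    · have h1 : N y ≤ N (y - x) + N x := by simpa [sub_add_cancel] using hadd (y - x) x
      have h2 : N (y - x) = N (x - y) := by rw [← hneg (x - y)]; congr 1; abel
      have := hN' (x - y)
      linarith
  refine Integrable.mono' (hf.norm.const_mul |cN|) (hcont.comp_aestronglyMeasurable hf.1) ?_
  refine Filter.Eventually.of_forall (fun τ => ?_)
  rw [Real.norm_eq_abs, abs_of_nonneg (hnonneg _)]
  exact hN' _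

/-- Master lemma: seminorm bound for a CLM-valued set integral applied to a vector. -/
theorem term_bound {V W : Type*} [NormedAddCommGroup V] [NormedSpace ℝ V]
    [FiniteDimensional ℝ V] [NormedAddCommGroup W] [NormedSpace ℝ W]
    (N : V → ℝ) (hadd : ∀ x y, N (x + y) ≤ N x + N y)
    (hsmul : ∀ (c : ℝ) x, N (c • x) = |c| * N x)
    {cN : ℝ} (hN : ∀ x, N x ≤ cN * ‖x‖)
    {S : Set ℝ} (hS : MeasurableSet S) {g : ℝ → W →L[ℝ] V}
    (hg : IntegrableOn g S volume) (y : W) {bound : ℝ → ℝ}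
    (hb : IntegrableOn bound S volume) (hpt : ∀ τ ∈ S, N (g τ y) ≤ bound τ) :
    N ((∫ τ in S, g τ) y) ≤ ∫ τ in S, bound τ := by
  rw [ContinuousLinearMap.integral_apply hg y]
  refine le_trans (normfam_integral_le N hadd hsmul hN (hg.apply_continuousLinearMap y)) ?_
  exact setIntegral_mono_on
    (normfam_comp_integrable N hadd hsmul hN (hg.apply_continuousLinearMap y)) hb hS hpt

theorem le_exp_div {δ u : ℝ} (hδ : 0 < δ) (hu : 0 ≤ u) : u ≤ Real.exp (δ * u) / δ := by
  rw [le_div_iff₀ hδ]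
  have h := Real.add_one_le_exp (δ * u)
  nlinarith

end AuxEstTools
section AuxEst
set_option synthInstance.maxHeartbeats 1000000
set_option maxHeartbeats 1600000
set_option linter.unusedSectionVars false

variable {E : Type*} [NormedAddCommGroup E] [NormedSpace ℝ E] [FiniteDimensional ℝ E]
variable {F : Type*} [NormedAddCommGroup F] [NormedSpace ℝ F] [FiniteDimensional ℝ F]
variable {A : ℝ → E →L[ℝ] E} {B : ℝ → F →L[ℝ] F}
variable {X : ℝ → ℝ → E →L[ℝ] E} {Y : ℝ → ℝ → F →L[ℝ] F}
variable {PA : ℝ → E →L[ℝ] E} {PB : ℝ → F →L[ℝ] F}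
variable {C : ℝ → F →L[ℝ] E}
variable {NA : ℝ → E → ℝ} {NB : ℝ → F → ℝ}
variable {κ κt cC α αt αb L₂ θ : ℝ}

theorem TR_forward_bound
    (hX : IsEvolution A X) (hY : IsEvolution B Y) (hC : LocallyIntegrable C volume)
    (hI2 : ∀ t' s' a : ℝ, 0 ≤ t' → 0 ≤ s' → 0 ≤ a →
      IntegrableOn (fun τ => ggO X Y (G2op X Y C PA PB) t' s' τ) (Set.Ioi a) volume)
    (hNAfam : IsNormFamily NA) (hNBfam : IsNormFamily NB)
    (vbXP : ∀ τ r x, 0 ≤ τ → τ ≤ r →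
      NA r ((X r τ) ((PAt X PA τ) x)) ≤ κ * Real.exp (-α * (r - τ)) * NA τ x)
    (vbXQ : ∀ r τ x, 0 ≤ r → r ≤ τ →
      NA r ((X r τ) ((QAt X PA τ) x)) ≤ κ * Real.exp (-α * (τ - r)) * NA τ x)
    (vbYP : ∀ τ r x, 0 ≤ τ → τ ≤ r →
      NB r ((Y r τ) ((PAt Y PB τ) x)) ≤ κt * Real.exp (-αt * (r - τ)) * NB τ x)
    (vbYQ : ∀ r τ x, 0 ≤ r → r ≤ τ →
      NB r ((Y r τ) ((QAt Y PB τ) x)) ≤ κt * Real.exp (-αt * (τ - r)) * NB τ x)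
    (vbC : ∀ τ y, 0 ≤ τ → NA τ ((C τ) y) ≤ cC * NB τ y)
    (hκ : 0 ≤ κ) (hκt : 0 ≤ κt) (hcC : 0 ≤ cC) (hα : 0 < α) (hαt : 0 < αt)
    (hαb0 : 0 < αb) (hαb1 : αb ≤ α) (hαb2 : αb ≤ αt) (hδ : 0 < min α αt - αb)
    (hNB0 : ∀ r x, 0 ≤ r → 0 ≤ NB r x)
    {t s : ℝ} {cNt : ℝ} (hNAup : ∀ x, NA t x ≤ cNt * ‖x‖)
    (hs : 0 ≤ s) (hst : s ≤ t) (y : F) :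
    NA t (((X t s).comp (GammaOp X Y C PA PB s) + (evolW X Y C t s).comp (PAt Y PB s)) y)
      ≤ (κ * κt * cC * (2 / (α + αt) + 1 / (min α αt - αb)))
        * Real.exp (-αb * (t - s)) * NB s y := by
  have ht : 0 ≤ t := le_trans hs hst
  have hρ : 0 < α + αt := by linarith
  set ρ := α + αt with hρdef
  set δ' := min α αt - αb with hδ'def
  set m' := min α αt with hm'def
  have hNBy : 0 ≤ NB s y := hNB0 s y hs
  -- decomposition
  set I1 := ∫ τ in Set.Ioc 0 s, ggO X Y (G1op X Y C PA PB) t s τ with hI1def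
  set I0 := ∫ τ in Set.Ioc s t, ggO X Y (G0op X Y C PA PB) t s τ with hI0def
  set J2 := ∫ τ in Set.Ioi t, ggO X Y (G2op X Y C PA PB) t s τ with hJ2def
  have hdecomp : (X t s).comp (GammaOp X Y C PA PB s) +
      (evolW X Y C t s).comp (PAt Y PB s) = -I1 + I0 - J2 := by
    rw [X_comp_Gamma hX hY hC hI2 hs t, W_comp_PBt hX hY hC t s]
    have hsplit2 := split_Ioi (f := fun τ => ggO X Y (G2op X Y C PA PB) t s τ)
      (intI_G2_Ioc hX hY hC t s) (hI2 t s (min s t) ht hs (le_min hs ht))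
    have h2 : (∫ τ in Set.Ioi s, ggO X Y (G2op X Y C PA PB) t s τ)
        = (∫ τ in s..t, ggO X Y (G2op X Y C PA PB) t s τ) + J2 := by
      rw [← hsplit2]; abel
    have h0 : (∫ τ in s..t, ggO X Y (G0op X Y C PA PB) t s τ) = I0 :=
      intervalIntegral.integral_of_le hst
    rw [h2, h0]
    abel
  rw [hdecomp]
  have happly : ((-I1 + I0 - J2) : F →L[ℝ] E) y = -(I1 y) + I0 y - J2 y := by
    simp [ContinuousLinearMap.sub_apply, ContinuousLinearMap.add_apply,
      ContinuousLinearMap.neg_apply]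
  rw [happly]
  have htri : NA t (-(I1 y) + I0 y - J2 y) ≤ NA t (I1 y) + NA t (I0 y) + NA t (J2 y) := by
    have h1 := normfam_sub_le hNAfam t (-(I1 y) + I0 y) (J2 y)
    have h2 := hNAfam.1 t (-(I1 y)) (I0 y)
    have h3 := normfam_neg hNAfam t (I1 y)
    linarith
  refine le_trans htri ?_
  -- Term 1
  have hT1 : NA t (I1 y) ≤ (κ * κt * cC * Real.exp (-α * (t - s)) * NB s y) * (1 / ρ) := by
    set c1 := κ * κt * cC * Real.exp (-α * (t - s)) * NB s y with hc1def
    have hc1 : 0 ≤ c1 := by positivity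
    have hpt : ∀ τ ∈ Set.Ioc (0:ℝ) s, NA t (ggO X Y (G1op X Y C PA PB) t s τ y)
        ≤ c1 * Real.exp (ρ * τ - ρ * s) := by
      intro τ hτ
      have hτ0 : 0 ≤ τ := hτ.1.le
      have hτs : τ ≤ s := hτ.2
      have hτt : τ ≤ t := le_trans hτs hst
      have hQmove : (QAt Y PB τ) ((Y τ s) y) = (Y τ s) ((QAt Y PB s) y) := by
        have h0 := congrArg (fun L : F →L[ℝ] F => L y) (QAt_invar (PA := PB) hY τ s)
        simpa [ContinuousLinearMap.comp_apply] using h0.symm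
      have hstep : NA t (ggO X Y (G1op X Y C PA PB) t s τ y)
          = NA t ((X t τ) ((PAt X PA τ) ((C τ) ((Y τ s) ((QAt Y PB s) y))))) := by
        simp only [ggO, G1op, ContinuousLinearMap.comp_apply]
        rw [hQmove]
      rw [hstep]
      calc NA t ((X t τ) ((PAt X PA τ) ((C τ) ((Y τ s) ((QAt Y PB s) y)))))
          ≤ κ * Real.exp (-α * (t - τ)) * NA τ ((C τ) ((Y τ s) ((QAt Y PB s) y))) :=
            vbXP τ t _ hτ0 hτt
      _ ≤ κ * Real.exp (-α * (t - τ)) * (cC * NB τ ((Y τ s) ((QAt Y PB s) y))) := by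
            refine mul_le_mul_of_nonneg_left (vbC τ _ hτ0) (by positivity)
      _ ≤ κ * Real.exp (-α * (t - τ)) *
            (cC * (κt * Real.exp (-αt * (s - τ)) * NB s y)) := by
            refine mul_le_mul_of_nonneg_left
              (mul_le_mul_of_nonneg_left (vbYQ τ s y hτ0 hτs) hcC) (by positivity)
      _ = c1 * Real.exp (ρ * τ - ρ * s) := by
            rw [hc1def]
            rw [show κ * Real.exp (-α * (t - τ)) * (cC * (κt * Real.exp (-αt * (s - τ)) * NB s y))
                = κ * κt * cC * NB s y * (Real.exp (-α * (t - τ)) * Real.exp (-αt * (s - τ)))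
              from by ring]
            rw [show Real.exp (-α * (t - τ)) * Real.exp (-αt * (s - τ))
                = Real.exp (-α * (t - s)) * Real.exp (ρ * τ - ρ * s) from by
              rw [← Real.exp_add, ← Real.exp_add]; congr 1; rw [hρdef]; ring]
            ring
    have hb : IntegrableOn (fun τ => c1 * Real.exp (ρ * τ - ρ * s)) (Set.Ioc 0 s) volume :=
      (Real.continuous_exp.comp (by continuity)).integrableOn_Ioc.const_mul c1
    have h1 := term_bound (NA t) (fun a b => hNAfam.1 t a b) (fun c x => hNAfam.2 t c x)
      hNAup measurableSet_Ioc (intI_G1_Ioc hX hY hC t s 0 s) y hb hpt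
    refine le_trans h1 ?_
    rw [integral_const_mul]
    exact mul_le_mul_of_nonneg_left (EIoc hρ hs) hc1
  -- Term 0 (middle)
  have hT0 : NA t (I0 y) ≤ (κ * κt * cC * NB s y) * ((1 / δ') * Real.exp (-αb * (t - s))) := by
    set c0 := κ * κt * cC * Real.exp (-m' * (t - s)) * NB s y with hc0def
    have hc0 : 0 ≤ c0 := by positivity
    have hpt : ∀ τ ∈ Set.Ioc s t, NA t (ggO X Y (G0op X Y C PA PB) t s τ y) ≤ c0 := by
      intro τ hτ
      have hsτ : s ≤ τ := hτ.1.le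
      have hτ0 : 0 ≤ τ := le_trans hs hsτ
      have hτt : τ ≤ t := hτ.2
      have hPmove : (PAt Y PB τ) ((Y τ s) y) = (Y τ s) ((PAt Y PB s) y) := by
        have h0 := congrArg (fun L : F →L[ℝ] F => L y) (PAt_invar (PA := PB) hY τ s)
        simpa [ContinuousLinearMap.comp_apply] using h0.symm
      have hstep : NA t (ggO X Y (G0op X Y C PA PB) t s τ y)
          = NA t ((X t τ) ((PAt X PA τ) ((C τ) ((Y τ s) ((PAt Y PB s) y))))) := by
        simp only [ggO, G0op, ContinuousLinearMap.comp_apply]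
        rw [hPmove]
      rw [hstep]
      calc NA t ((X t τ) ((PAt X PA τ) ((C τ) ((Y τ s) ((PAt Y PB s) y)))))
          ≤ κ * Real.exp (-α * (t - τ)) * NA τ ((C τ) ((Y τ s) ((PAt Y PB s) y))) :=
            vbXP τ t _ hτ0 hτt
      _ ≤ κ * Real.exp (-α * (t - τ)) * (cC * NB τ ((Y τ s) ((PAt Y PB s) y))) :=
            mul_le_mul_of_nonneg_left (vbC τ _ hτ0) (by positivity)
      _ ≤ κ * Real.exp (-α * (t - τ)) *
            (cC * (κt * Real.exp (-αt * (τ - s)) * NB s y)) :=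
            mul_le_mul_of_nonneg_left
              (mul_le_mul_of_nonneg_left (vbYP s τ y hs hsτ) hcC) (by positivity)
      _ ≤ c0 := by
            rw [hc0def]
            rw [show κ * Real.exp (-α * (t - τ)) * (cC * (κt * Real.exp (-αt * (τ - s)) * NB s y))
                = κ * κt * cC * NB s y * (Real.exp (-α * (t - τ)) * Real.exp (-αt * (τ - s)))
              from by ring]
            rw [show κ * κt * cC * Real.exp (-m' * (t - s)) * NB s y
                = κ * κt * cC * NB s y * Real.exp (-m' * (t - s)) from by ring]
            refine mul_le_mul_of_nonneg_left ?_ (by positivity)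
            rw [← Real.exp_add, Real.exp_le_exp]
            have hm1 : m' ≤ α := min_le_left _ _
            have hm2 : m' ≤ αt := min_le_right _ _
            nlinarith
    have hb : IntegrableOn (fun _ : ℝ => c0) (Set.Ioc s t) volume :=
      integrableOn_const (by rw [Real.volume_Ioc]; exact ENNReal.ofReal_ne_top)
    have h1 := term_bound (NA t) (fun a b => hNAfam.1 t a b) (fun c x => hNAfam.2 t c x)
      hNAup measurableSet_Ioc (intI_G0_Ioc hX hY hC t s s t) y hb hpt
    refine le_trans h1 ?_
    rw [setIntegral_const, Real.volume_real_Ioc_of_le (by linarith), smul_eq_mul]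
    -- (t - s) * c0 ≤ ...
    rw [hc0def]
    have hts0 : 0 ≤ t - s := by linarith
    have hkey : (t - s) * Real.exp (-m' * (t - s)) ≤ (1 / δ') * Real.exp (-αb * (t - s)) := by
      have h2 := le_exp_div hδ hts0
      have h3 : Real.exp (δ' * (t - s)) / δ' * Real.exp (-m' * (t - s))
          = (1 / δ') * Real.exp (-αb * (t - s)) := by
        rw [div_mul_eq_mul_div, ← Real.exp_add, one_div, div_eq_mul_inv, mul_comm _ δ'⁻¹]
        congr 2
        rw [hδ'def]
        ring
      calc (t - s) * Real.exp (-m' * (t - s))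
          ≤ Real.exp (δ' * (t - s)) / δ' * Real.exp (-m' * (t - s)) :=
            mul_le_mul_of_nonneg_right h2 (Real.exp_pos _).le
      _ = (1 / δ') * Real.exp (-αb * (t - s)) := h3
    calc (t - s) * (κ * κt * cC * Real.exp (-m' * (t - s)) * NB s y)
        = (κ * κt * cC * NB s y) * ((t - s) * Real.exp (-m' * (t - s))) := by ring
    _ ≤ (κ * κt * cC * NB s y) * ((1 / δ') * Real.exp (-αb * (t - s))) :=
        mul_le_mul_of_nonneg_left hkey (by positivity)
  -- Term 2 (tail)
  have hT2 : NA t (J2 y) ≤ (κ * κt * cC * Real.exp (-αt * (t - s)) * NB s y) * (1 / ρ) := by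
    set c2 := κ * κt * cC * Real.exp (-αt * (t - s)) * NB s y with hc2def
    have hc2 : 0 ≤ c2 := by positivity
    have hpt : ∀ τ ∈ Set.Ioi t, NA t (ggO X Y (G2op X Y C PA PB) t s τ y)
        ≤ c2 * Real.exp (ρ * t - ρ * τ) := by
      intro τ hτ
      have htτ : t ≤ τ := (Set.mem_Ioi.1 hτ).le
      have hτ0 : 0 ≤ τ := le_trans ht htτ
      have hsτ : s ≤ τ := le_trans hst htτ
      have hPmove : (PAt Y PB τ) ((Y τ s) y) = (Y τ s) ((PAt Y PB s) y) := by
        have h0 := congrArg (fun L : F →L[ℝ] F => L y) (PAt_invar (PA := PB) hY τ s)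
        simpa [ContinuousLinearMap.comp_apply] using h0.symm
      have hstep : NA t (ggO X Y (G2op X Y C PA PB) t s τ y)
          = NA t ((X t τ) ((QAt X PA τ) ((C τ) ((Y τ s) ((PAt Y PB s) y))))) := by
        simp only [ggO, G2op, ContinuousLinearMap.comp_apply]
        rw [hPmove]
      rw [hstep]
      calc NA t ((X t τ) ((QAt X PA τ) ((C τ) ((Y τ s) ((PAt Y PB s) y)))))
          ≤ κ * Real.exp (-α * (τ - t)) * NA τ ((C τ) ((Y τ s) ((PAt Y PB s) y))) :=
            vbXQ t τ _ ht htτ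
      _ ≤ κ * Real.exp (-α * (τ - t)) * (cC * NB τ ((Y τ s) ((PAt Y PB s) y))) :=
            mul_le_mul_of_nonneg_left (vbC τ _ hτ0) (by positivity)
      _ ≤ κ * Real.exp (-α * (τ - t)) *
            (cC * (κt * Real.exp (-αt * (τ - s)) * NB s y)) :=
            mul_le_mul_of_nonneg_left
              (mul_le_mul_of_nonneg_left (vbYP s τ y hs hsτ) hcC) (by positivity)
      _ = c2 * Real.exp (ρ * t - ρ * τ) := by
            rw [hc2def]
            rw [show κ * Real.exp (-α * (τ - t)) * (cC * (κt * Real.exp (-αt * (τ - s)) * NB s y))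
                = κ * κt * cC * NB s y * (Real.exp (-α * (τ - t)) * Real.exp (-αt * (τ - s)))
              from by ring]
            rw [show Real.exp (-α * (τ - t)) * Real.exp (-αt * (τ - s))
                = Real.exp (-αt * (t - s)) * Real.exp (ρ * t - ρ * τ) from by
              rw [← Real.exp_add, ← Real.exp_add]; congr 1; rw [hρdef]; ring]
            ring
    have hb : IntegrableOn (fun τ => c2 * Real.exp (ρ * t - ρ * τ)) (Set.Ioi t) volume :=
      (EIoi_integrable hρ).const_mul c2
    have h1 := term_bound (NA t) (fun a b => hNAfam.1 t a b) (fun c x => hNAfam.2 t c x)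
      hNAup measurableSet_Ioi (hI2 t s t ht hs ht) y hb hpt
    refine le_trans h1 ?_
    rw [integral_const_mul]
    exact mul_le_mul_of_nonneg_left (EIoi hρ) hc2
  -- combine
  have hets : 0 ≤ t - s := by linarith
  have he1 : Real.exp (-α * (t - s)) ≤ Real.exp (-αb * (t - s)) := by
    rw [Real.exp_le_exp]; nlinarith
  have he2 : Real.exp (-αt * (t - s)) ≤ Real.exp (-αb * (t - s)) := by
    rw [Real.exp_le_exp]; nlinarith
  have hfin1 : NA t (I1 y) ≤ (κ * κt * cC / ρ) * Real.exp (-αb * (t - s)) * NB s y := by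
    refine le_trans hT1 ?_
    rw [show (κ * κt * cC * Real.exp (-α * (t - s)) * NB s y) * (1 / ρ)
        = (κ * κt * cC / ρ) * NB s y * Real.exp (-α * (t - s)) from by ring]
    rw [show (κ * κt * cC / ρ) * Real.exp (-αb * (t - s)) * NB s y
        = (κ * κt * cC / ρ) * NB s y * Real.exp (-αb * (t - s)) from by ring]
    exact mul_le_mul_of_nonneg_left he1 (by positivity)
  have hfin2 : NA t (J2 y) ≤ (κ * κt * cC / ρ) * Real.exp (-αb * (t - s)) * NB s y := by
    refine le_trans hT2 ?_
    rw [show (κ * κt * cC * Real.exp (-αt * (t - s)) * NB s y) * (1 / ρ)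
        = (κ * κt * cC / ρ) * NB s y * Real.exp (-αt * (t - s)) from by ring]
    rw [show (κ * κt * cC / ρ) * Real.exp (-αb * (t - s)) * NB s y
        = (κ * κt * cC / ρ) * NB s y * Real.exp (-αb * (t - s)) from by ring]
    exact mul_le_mul_of_nonneg_left he2 (by positivity)
  have hfin0 : NA t (I0 y) ≤ (κ * κt * cC / δ') * Real.exp (-αb * (t - s)) * NB s y := by
    refine le_trans hT0 (le_of_eq ?_)
    field_simp
  calc NA t (I1 y) + NA t (I0 y) + NA t (J2 y)
      ≤ (κ * κt * cC / ρ) * Real.exp (-αb * (t - s)) * NB s y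
        + (κ * κt * cC / δ') * Real.exp (-αb * (t - s)) * NB s y
        + (κ * κt * cC / ρ) * Real.exp (-αb * (t - s)) * NB s y := by
        linarith
  _ = (κ * κt * cC * (2 / ρ + 1 / δ')) * Real.exp (-αb * (t - s)) * NB s y := by
        field_simp
        ring

end AuxEst
section AuxEst2
set_option synthInstance.maxHeartbeats 1000000
set_option maxHeartbeats 1600000
set_option linter.unusedSectionVars false

variable {E : Type*} [NormedAddCommGroup E] [NormedSpace ℝ E] [FiniteDimensional ℝ E]
variable {F : Type*} [NormedAddCommGroup F] [NormedSpace ℝ F] [FiniteDimensional ℝ F]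
variable {A : ℝ → E →L[ℝ] E} {B : ℝ → F →L[ℝ] F}
variable {X : ℝ → ℝ → E →L[ℝ] E} {Y : ℝ → ℝ → F →L[ℝ] F}
variable {PA : ℝ → E →L[ℝ] E} {PB : ℝ → F →L[ℝ] F}
variable {C : ℝ → F →L[ℝ] E}
variable {NA : ℝ → E → ℝ} {NB : ℝ → F → ℝ}
variable {κ κt cC α αt αb : ℝ}

theorem TR_backward_bound
    (hX : IsEvolution A X) (hY : IsEvolution B Y) (hC : LocallyIntegrable C volume)
    (hI2 : ∀ t' s' a : ℝ, 0 ≤ t' → 0 ≤ s' → 0 ≤ a →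
      IntegrableOn (fun τ => ggO X Y (G2op X Y C PA PB) t' s' τ) (Set.Ioi a) volume)
    (hNAfam : IsNormFamily NA) (hNBfam : IsNormFamily NB)
    (vbXP : ∀ τ r x, 0 ≤ τ → τ ≤ r →
      NA r ((X r τ) ((PAt X PA τ) x)) ≤ κ * Real.exp (-α * (r - τ)) * NA τ x)
    (vbXQ : ∀ r τ x, 0 ≤ r → r ≤ τ →
      NA r ((X r τ) ((QAt X PA τ) x)) ≤ κ * Real.exp (-α * (τ - r)) * NA τ x)
    (vbYP : ∀ τ r x, 0 ≤ τ → τ ≤ r →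
      NB r ((Y r τ) ((PAt Y PB τ) x)) ≤ κt * Real.exp (-αt * (r - τ)) * NB τ x)
    (vbYQ : ∀ r τ x, 0 ≤ r → r ≤ τ →
      NB r ((Y r τ) ((QAt Y PB τ) x)) ≤ κt * Real.exp (-αt * (τ - r)) * NB τ x)
    (vbC : ∀ τ y, 0 ≤ τ → NA τ ((C τ) y) ≤ cC * NB τ y)
    (hκ : 0 ≤ κ) (hκt : 0 ≤ κt) (hcC : 0 ≤ cC) (hα : 0 < α) (hαt : 0 < αt)
    (hαb0 : 0 < αb) (hαb1 : αb ≤ α) (hαb2 : αb ≤ αt) (hδ : 0 < min α αt - αb)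
    (hNB0 : ∀ r x, 0 ≤ r → 0 ≤ NB r x)
    {t s : ℝ} {cNt : ℝ} (hNAup : ∀ x, NA t x ≤ cNt * ‖x‖)
    (ht : 0 ≤ t) (hts : t ≤ s) (y : F) :
    NA t ((-((X t s).comp (GammaOp X Y C PA PB s)) +
        (evolW X Y C t s).comp (QAt Y PB s)) y)
      ≤ (κ * κt * cC * (2 / (α + αt) + 1 / (min α αt - αb)))
        * Real.exp (-αb * (s - t)) * NB s y := by
  have hs : 0 ≤ s := le_trans ht hts
  have hρ : 0 < α + αt := by linarith
  set ρ := α + αt with hρdef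
  set δ' := min α αt - αb with hδ'def
  set m' := min α αt with hm'def
  have hNBy : 0 ≤ NB s y := hNB0 s y hs
  set I1 := ∫ τ in Set.Ioc 0 t, ggO X Y (G1op X Y C PA PB) t s τ with hI1def
  set J3 := ∫ τ in Set.Ioc t s, ggO X Y (G3op X Y C PA PB) t s τ with hJ3def
  set J2 := ∫ τ in Set.Ioi s, ggO X Y (G2op X Y C PA PB) t s τ with hJ2def
  have hdecomp : -((X t s).comp (GammaOp X Y C PA PB s)) +
      (evolW X Y C t s).comp (QAt Y PB s) = I1 - J3 + J2 := by
    rw [X_comp_Gamma hX hY hC hI2 hs t, W_comp_QBt hX hY hC t s]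
    have hsplit1 := split_Ioc (f := fun τ => ggO X Y (G1op X Y C PA PB) t s τ)
      (intI_G1_Ioc hX hY hC t s) (s := t) (t := s) ht hs
    -- : ∫ Ioc 0 s - ∫ Ioc 0 t = ∫ t..s
    have h1 : (∫ τ in s..t, ggO X Y (G1op X Y C PA PB) t s τ)
        = -(∫ τ in t..s, ggO X Y (G1op X Y C PA PB) t s τ) :=
      intervalIntegral.integral_symm t s
    have h3 : (∫ τ in s..t, ggO X Y (G3op X Y C PA PB) t s τ) = -J3 := by
      rw [intervalIntegral.integral_symm t s, intervalIntegral.integral_of_le hts]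
    have h2 : (∫ τ in Set.Ioc 0 s, ggO X Y (G1op X Y C PA PB) t s τ)
        = I1 + ∫ τ in t..s, ggO X Y (G1op X Y C PA PB) t s τ := by
      rw [← hsplit1]; abel
    rw [h1, h3, h2]
    abel
  rw [hdecomp]
  have happly : ((I1 - J3 + J2) : F →L[ℝ] E) y = I1 y - J3 y + J2 y := by
    simp [ContinuousLinearMap.sub_apply, ContinuousLinearMap.add_apply]
  rw [happly]
  have htri : NA t (I1 y - J3 y + J2 y) ≤ NA t (I1 y) + NA t (J3 y) + NA t (J2 y) := by
    have h1 := hNAfam.1 t (I1 y - J3 y) (J2 y)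
    have h2 := normfam_sub_le hNAfam t (I1 y) (J3 y)
    linarith
  refine le_trans htri ?_
  -- Term 1 : Ioc 0 t
  have hT1 : NA t (I1 y) ≤ (κ * κt * cC * Real.exp (-αt * (s - t)) * NB s y) * (1 / ρ) := by
    set c1 := κ * κt * cC * Real.exp (-αt * (s - t)) * NB s y with hc1def
    have hc1 : 0 ≤ c1 := by positivity
    have hpt : ∀ τ ∈ Set.Ioc (0:ℝ) t, NA t (ggO X Y (G1op X Y C PA PB) t s τ y)
        ≤ c1 * Real.exp (ρ * τ - ρ * t) := by
      intro τ hτ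
      have hτ0 : 0 ≤ τ := hτ.1.le
      have hτt : τ ≤ t := hτ.2
      have hτs : τ ≤ s := le_trans hτt hts
      have hQmove : (QAt Y PB τ) ((Y τ s) y) = (Y τ s) ((QAt Y PB s) y) := by
        have h0 := congrArg (fun L : F →L[ℝ] F => L y) (QAt_invar (PA := PB) hY τ s)
        simpa [ContinuousLinearMap.comp_apply] using h0.symm
      have hstep : NA t (ggO X Y (G1op X Y C PA PB) t s τ y)
          = NA t ((X t τ) ((PAt X PA τ) ((C τ) ((Y τ s) ((QAt Y PB s) y))))) := by
        simp only [ggO, G1op, ContinuousLinearMap.comp_apply]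
        rw [hQmove]
      rw [hstep]
      calc NA t ((X t τ) ((PAt X PA τ) ((C τ) ((Y τ s) ((QAt Y PB s) y)))))
          ≤ κ * Real.exp (-α * (t - τ)) * NA τ ((C τ) ((Y τ s) ((QAt Y PB s) y))) :=
            vbXP τ t _ hτ0 hτt
      _ ≤ κ * Real.exp (-α * (t - τ)) * (cC * NB τ ((Y τ s) ((QAt Y PB s) y))) :=
            mul_le_mul_of_nonneg_left (vbC τ _ hτ0) (by positivity)
      _ ≤ κ * Real.exp (-α * (t - τ)) *
            (cC * (κt * Real.exp (-αt * (s - τ)) * NB s y)) :=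
            mul_le_mul_of_nonneg_left
              (mul_le_mul_of_nonneg_left (vbYQ τ s y hτ0 hτs) hcC) (by positivity)
      _ = c1 * Real.exp (ρ * τ - ρ * t) := by
            rw [hc1def]
            rw [show κ * Real.exp (-α * (t - τ)) * (cC * (κt * Real.exp (-αt * (s - τ)) * NB s y))
                = κ * κt * cC * NB s y * (Real.exp (-α * (t - τ)) * Real.exp (-αt * (s - τ)))
              from by ring]
            rw [show Real.exp (-α * (t - τ)) * Real.exp (-αt * (s - τ))
                = Real.exp (-αt * (s - t)) * Real.exp (ρ * τ - ρ * t) from by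
              rw [← Real.exp_add, ← Real.exp_add]; congr 1; rw [hρdef]; ring]
            ring
    have hb : IntegrableOn (fun τ => c1 * Real.exp (ρ * τ - ρ * t)) (Set.Ioc 0 t) volume :=
      (Real.continuous_exp.comp (by continuity)).integrableOn_Ioc.const_mul c1
    have h1 := term_bound (NA t) (fun a b => hNAfam.1 t a b) (fun c x => hNAfam.2 t c x)
      hNAup measurableSet_Ioc (intI_G1_Ioc hX hY hC t s 0 t) y hb hpt
    refine le_trans h1 ?_
    rw [integral_const_mul]
    exact mul_le_mul_of_nonneg_left (EIoc hρ ht) hc1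
  -- Term 3 : Ioc t s
  have hT3 : NA t (J3 y) ≤ (κ * κt * cC * NB s y) * ((1 / δ') * Real.exp (-αb * (s - t))) := by
    set c3 := κ * κt * cC * Real.exp (-m' * (s - t)) * NB s y with hc3def
    have hc3 : 0 ≤ c3 := by positivity
    have hpt : ∀ τ ∈ Set.Ioc t s, NA t (ggO X Y (G3op X Y C PA PB) t s τ y) ≤ c3 := by
      intro τ hτ
      have htτ : t ≤ τ := hτ.1.le
      have hτ0 : 0 ≤ τ := le_trans ht htτ
      have hτs : τ ≤ s := hτ.2
      have hQmove : (QAt Y PB τ) ((Y τ s) y) = (Y τ s) ((QAt Y PB s) y) := by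
        have h0 := congrArg (fun L : F →L[ℝ] F => L y) (QAt_invar (PA := PB) hY τ s)
        simpa [ContinuousLinearMap.comp_apply] using h0.symm
      have hstep : NA t (ggO X Y (G3op X Y C PA PB) t s τ y)
          = NA t ((X t τ) ((QAt X PA τ) ((C τ) ((Y τ s) ((QAt Y PB s) y))))) := by
        simp only [ggO, G3op, ContinuousLinearMap.comp_apply]
        rw [hQmove]
      rw [hstep]
      calc NA t ((X t τ) ((QAt X PA τ) ((C τ) ((Y τ s) ((QAt Y PB s) y)))))
          ≤ κ * Real.exp (-α * (τ - t)) * NA τ ((C τ) ((Y τ s) ((QAt Y PB s) y))) :=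
            vbXQ t τ _ ht htτ
      _ ≤ κ * Real.exp (-α * (τ - t)) * (cC * NB τ ((Y τ s) ((QAt Y PB s) y))) :=
            mul_le_mul_of_nonneg_left (vbC τ _ hτ0) (by positivity)
      _ ≤ κ * Real.exp (-α * (τ - t)) *
            (cC * (κt * Real.exp (-αt * (s - τ)) * NB s y)) :=
            mul_le_mul_of_nonneg_left
              (mul_le_mul_of_nonneg_left (vbYQ τ s y hτ0 hτs) hcC) (by positivity)
      _ ≤ c3 := by
            rw [hc3def]
            rw [show κ * Real.exp (-α * (τ - t)) * (cC * (κt * Real.exp (-αt * (s - τ)) * NB s y))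
                = κ * κt * cC * NB s y * (Real.exp (-α * (τ - t)) * Real.exp (-αt * (s - τ)))
              from by ring]
            rw [show κ * κt * cC * Real.exp (-m' * (s - t)) * NB s y
                = κ * κt * cC * NB s y * Real.exp (-m' * (s - t)) from by ring]
            refine mul_le_mul_of_nonneg_left ?_ (by positivity)
            rw [← Real.exp_add, Real.exp_le_exp]
            have hm1 : m' ≤ α := min_le_left _ _
            have hm2 : m' ≤ αt := min_le_right _ _
            nlinarith
    have hb : IntegrableOn (fun _ : ℝ => c3) (Set.Ioc t s) volume :=
      integrableOn_const (by rw [Real.volume_Ioc]; exact ENNReal.ofReal_ne_top)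
    have h1 := term_bound (NA t) (fun a b => hNAfam.1 t a b) (fun c x => hNAfam.2 t c x)
      hNAup measurableSet_Ioc (intI_G3_Ioc hX hY hC t s t s) y hb hpt
    refine le_trans h1 ?_
    rw [setIntegral_const, Real.volume_real_Ioc_of_le (by linarith), smul_eq_mul]
    rw [hc3def]
    have hts0 : 0 ≤ s - t := by linarith
    have hkey : (s - t) * Real.exp (-m' * (s - t)) ≤ (1 / δ') * Real.exp (-αb * (s - t)) := by
      have h2 := le_exp_div hδ hts0
      have h3 : Real.exp (δ' * (s - t)) / δ' * Real.exp (-m' * (s - t))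
          = (1 / δ') * Real.exp (-αb * (s - t)) := by
        rw [div_mul_eq_mul_div, ← Real.exp_add, one_div, div_eq_mul_inv, mul_comm _ δ'⁻¹]
        congr 2
        rw [hδ'def]
        ring
      calc (s - t) * Real.exp (-m' * (s - t))
          ≤ Real.exp (δ' * (s - t)) / δ' * Real.exp (-m' * (s - t)) :=
            mul_le_mul_of_nonneg_right h2 (Real.exp_pos _).le
      _ = (1 / δ') * Real.exp (-αb * (s - t)) := h3
    calc (s - t) * (κ * κt * cC * Real.exp (-m' * (s - t)) * NB s y)
        = (κ * κt * cC * NB s y) * ((s - t) * Real.exp (-m' * (s - t))) := by ring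
    _ ≤ (κ * κt * cC * NB s y) * ((1 / δ') * Real.exp (-αb * (s - t))) :=
        mul_le_mul_of_nonneg_left hkey (by positivity)
  -- Term 2 : Ioi s
  have hT2 : NA t (J2 y) ≤ (κ * κt * cC * Real.exp (-α * (s - t)) * NB s y) * (1 / ρ) := by
    set c2 := κ * κt * cC * Real.exp (-α * (s - t)) * NB s y with hc2def
    have hc2 : 0 ≤ c2 := by positivity
    have hpt : ∀ τ ∈ Set.Ioi s, NA t (ggO X Y (G2op X Y C PA PB) t s τ y)
        ≤ c2 * Real.exp (ρ * s - ρ * τ) := by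
      intro τ hτ
      have hsτ : s ≤ τ := (Set.mem_Ioi.1 hτ).le
      have hτ0 : 0 ≤ τ := le_trans hs hsτ
      have htτ : t ≤ τ := le_trans hts hsτ
      have hPmove : (PAt Y PB τ) ((Y τ s) y) = (Y τ s) ((PAt Y PB s) y) := by
        have h0 := congrArg (fun L : F →L[ℝ] F => L y) (PAt_invar (PA := PB) hY τ s)
        simpa [ContinuousLinearMap.comp_apply] using h0.symm
      have hstep : NA t (ggO X Y (G2op X Y C PA PB) t s τ y)
          = NA t ((X t τ) ((QAt X PA τ) ((C τ) ((Y τ s) ((PAt Y PB s) y))))) := by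
        simp only [ggO, G2op, ContinuousLinearMap.comp_apply]
        rw [hPmove]
      rw [hstep]
      calc NA t ((X t τ) ((QAt X PA τ) ((C τ) ((Y τ s) ((PAt Y PB s) y)))))
          ≤ κ * Real.exp (-α * (τ - t)) * NA τ ((C τ) ((Y τ s) ((PAt Y PB s) y))) :=
            vbXQ t τ _ ht htτ
      _ ≤ κ * Real.exp (-α * (τ - t)) * (cC * NB τ ((Y τ s) ((PAt Y PB s) y))) :=
            mul_le_mul_of_nonneg_left (vbC τ _ hτ0) (by positivity)
      _ ≤ κ * Real.exp (-α * (τ - t)) *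
            (cC * (κt * Real.exp (-αt * (τ - s)) * NB s y)) :=
            mul_le_mul_of_nonneg_left
              (mul_le_mul_of_nonneg_left (vbYP s τ y hs hsτ) hcC) (by positivity)
      _ = c2 * Real.exp (ρ * s - ρ * τ) := by
            rw [hc2def]
            rw [show κ * Real.exp (-α * (τ - t)) * (cC * (κt * Real.exp (-αt * (τ - s)) * NB s y))
                = κ * κt * cC * NB s y * (Real.exp (-α * (τ - t)) * Real.exp (-αt * (τ - s)))
              from by ring]
            rw [show Real.exp (-α * (τ - t)) * Real.exp (-αt * (τ - s))
                = Real.exp (-α * (s - t)) * Real.exp (ρ * s - ρ * τ) from by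
              rw [← Real.exp_add, ← Real.exp_add]; congr 1; rw [hρdef]; ring]
            ring
    have hb : IntegrableOn (fun τ => c2 * Real.exp (ρ * s - ρ * τ)) (Set.Ioi s) volume :=
      (EIoi_integrable hρ).const_mul c2
    have h1 := term_bound (NA t) (fun a b => hNAfam.1 t a b) (fun c x => hNAfam.2 t c x)
      hNAup measurableSet_Ioi (hI2 t s s ht hs hs) y hb hpt
    refine le_trans h1 ?_
    rw [integral_const_mul]
    exact mul_le_mul_of_nonneg_left (EIoi hρ) hc2
  -- combine
  have hets : 0 ≤ s - t := by linarith
  have he1 : Real.exp (-αt * (s - t)) ≤ Real.exp (-αb * (s - t)) := by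
    rw [Real.exp_le_exp]; nlinarith
  have he2 : Real.exp (-α * (s - t)) ≤ Real.exp (-αb * (s - t)) := by
    rw [Real.exp_le_exp]; nlinarith
  have hfin1 : NA t (I1 y) ≤ (κ * κt * cC / ρ) * Real.exp (-αb * (s - t)) * NB s y := by
    refine le_trans hT1 ?_
    rw [show (κ * κt * cC * Real.exp (-αt * (s - t)) * NB s y) * (1 / ρ)
        = (κ * κt * cC / ρ) * NB s y * Real.exp (-αt * (s - t)) from by ring]
    rw [show (κ * κt * cC / ρ) * Real.exp (-αb * (s - t)) * NB s y
        = (κ * κt * cC / ρ) * NB s y * Real.exp (-αb * (s - t)) from by ring]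
    exact mul_le_mul_of_nonneg_left he1 (by positivity)
  have hfin2 : NA t (J2 y) ≤ (κ * κt * cC / ρ) * Real.exp (-αb * (s - t)) * NB s y := by
    refine le_trans hT2 ?_
    rw [show (κ * κt * cC * Real.exp (-α * (s - t)) * NB s y) * (1 / ρ)
        = (κ * κt * cC / ρ) * NB s y * Real.exp (-α * (s - t)) from by ring]
    rw [show (κ * κt * cC / ρ) * Real.exp (-αb * (s - t)) * NB s y
        = (κ * κt * cC / ρ) * NB s y * Real.exp (-αb * (s - t)) from by ring]
    exact mul_le_mul_of_nonneg_left he2 (by positivity)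
  have hfin3 : NA t (J3 y) ≤ (κ * κt * cC / δ') * Real.exp (-αb * (s - t)) * NB s y := by
    refine le_trans hT3 (le_of_eq ?_)
    field_simp
  calc NA t (I1 y) + NA t (J3 y) + NA t (J2 y)
      ≤ (κ * κt * cC / ρ) * Real.exp (-αb * (s - t)) * NB s y
        + (κ * κt * cC / δ') * Real.exp (-αb * (s - t)) * NB s y
        + (κ * κt * cC / ρ) * Real.exp (-αb * (s - t)) * NB s y := by
        linarith
  _ = (κ * κt * cC * (2 / ρ + 1 / δ')) * Real.exp (-αb * (s - t)) * NB s y := by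
        field_simp
        ring

end AuxEst2
set_option maxHeartbeats 4000000
set_option synthInstance.maxHeartbeats 1000000
set_option linter.unusedVariables false

/-- Theorem `vietnam`: if the diagonal subsystems of an upper block
triangular system have half nonuniform bounded growth and nonuniform exponential
dichotomies, and (via the Uniformization Lemma norms) the uniform estimates of
hypothesis (iii) hold with the off-diagonal block bounded in the parametrized norms,
then the triangular system has a nonuniform exponential dichotomy and half nonuniform
bounded growth on `[0,∞)`. -/
theorem triangular_dichotomy_converse {n m : ℕ}
    (A : ℝ → EuclideanSpace ℝ (Fin n) →L[ℝ] EuclideanSpace ℝ (Fin n))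
    (B : ℝ → EuclideanSpace ℝ (Fin m) →L[ℝ] EuclideanSpace ℝ (Fin m))
    (C : ℝ → EuclideanSpace ℝ (Fin m) →L[ℝ] EuclideanSpace ℝ (Fin n))
    (hA : MeasureTheory.LocallyIntegrable A MeasureTheory.volume)
    (hB : MeasureTheory.LocallyIntegrable B MeasureTheory.volume)
    (hC : MeasureTheory.LocallyIntegrable C MeasureTheory.volume)
    (X : ℝ → ℝ → EuclideanSpace ℝ (Fin n) →L[ℝ] EuclideanSpace ℝ (Fin n))
    (Y : ℝ → ℝ → EuclideanSpace ℝ (Fin m) →L[ℝ] EuclideanSpace ℝ (Fin m))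
    (T : ℝ → ℝ → (EuclideanSpace ℝ (Fin n) × EuclideanSpace ℝ (Fin m)) →L[ℝ]
      (EuclideanSpace ℝ (Fin n) × EuclideanSpace ℝ (Fin m)))
    (hX : IsEvolution A X) (hY : IsEvolution B Y)
    (hT : IsEvolution (fun t => blockUpper (A t) (B t) (C t)) T)
    -- (i) half nonuniform bounded growth of the diagonal subsystems
    (M l w Mt lt wt : ℝ)
    (hbgX : HalfNBG X M l w) (hbgY : HalfNBG Y Mt lt wt)
    -- (ii) nonuniform exponential dichotomies of the diagonal subsystems
    (PA : ℝ → EuclideanSpace ℝ (Fin n) →L[ℝ] EuclideanSpace ℝ (Fin n))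
    (PB : ℝ → EuclideanSpace ℝ (Fin m) →L[ℝ] EuclideanSpace ℝ (Fin m))
    (K ε α Kt εt αt : ℝ)
    (hdX : NonuniformED X PA K ε α) (hdY : NonuniformED Y PB Kt εt αt)
    -- the parametrized norms coming from the Uniformization Lemma
    (θ : ℝ) (hθ : θ = max (max l lt) (max ε εt))
    (NA : ℝ → EuclideanSpace ℝ (Fin n) → ℝ) (NB : ℝ → EuclideanSpace ℝ (Fin m) → ℝ)
    (hNAfam : IsNormFamily NA) (hNBfam : IsNormFamily NB)
    (L₁ L₂ : ℝ) (hL₁ : 0 < L₁) (hL₂ : 1 ≤ L₂)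
    (hsandA : ∀ (t : ℝ) (x : EuclideanSpace ℝ (Fin n)), 0 ≤ t →
      L₁ * ‖x‖ ≤ NA t x ∧ NA t x ≤ L₂ * Real.exp (θ * t) * ‖x‖)
    (hsandB : ∀ (t : ℝ) (y : EuclideanSpace ℝ (Fin m)), 0 ≤ t →
      L₁ * ‖y‖ ≤ NB t y ∧ NB t y ≤ L₂ * Real.exp (θ * t) * ‖y‖)
    -- uniform dichotomy estimates in the parametrized norms
    (κ κt μ μt : ℝ)
    (hPX1 : ∀ s t : ℝ, 0 ≤ s → s ≤ t →
      pNorm NA NA s t ((X t s).comp (PA s)) ≤ κ * Real.exp (-α * (t - s)))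
    (hPX2 : ∀ t s : ℝ, 0 ≤ t → t ≤ s →
      pNorm NA NA s t ((X t s).comp (ContinuousLinearMap.id ℝ _ - PA s)) ≤
        κ * Real.exp (-α * (s - t)))
    (hPY1 : ∀ s t : ℝ, 0 ≤ s → s ≤ t →
      pNorm NB NB s t ((Y t s).comp (PB s)) ≤ κt * Real.exp (-αt * (t - s)))
    (hPY2 : ∀ t s : ℝ, 0 ≤ t → t ≤ s →
      pNorm NB NB s t ((Y t s).comp (ContinuousLinearMap.id ℝ _ - PB s)) ≤
        κt * Real.exp (-αt * (s - t)))
    -- uniform bounded growth estimates in the parametrized norms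
    (hBGX : ∀ s t : ℝ, 0 ≤ s → s ≤ t →
      pNorm NA NA s t (X t s) ≤ μ * Real.exp (w * (t - s)))
    (hBGY : ∀ s t : ℝ, 0 ≤ s → s ≤ t →
      pNorm NB NB s t (Y t s) ≤ μt * Real.exp (wt * (t - s)))
    -- (iii) the off-diagonal block is bounded in the parametrized norms
    (cC : ℝ) (hCbound : ∀ τ : ℝ, 0 ≤ τ → pNorm NB NA τ τ (C τ) ≤ cC)
    (hθmin : θ < min α αt) :
    (∃ (P : ℝ → (EuclideanSpace ℝ (Fin n) × EuclideanSpace ℝ (Fin m)) →L[ℝ]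
        (EuclideanSpace ℝ (Fin n) × EuclideanSpace ℝ (Fin m)))
      (Kb εb αb : ℝ), NonuniformED T P Kb εb αb) ∧
    (∃ Mb θb ωb : ℝ, HalfNBG T Mb θb ωb) := by
  classical
  -- order relations among the exponents
  have hεθ : ε ≤ θ := by rw [hθ]; exact le_trans (le_max_left ε εt) (le_max_right _ _)
  have hεtθ : εt ≤ θ := by rw [hθ]; exact le_trans (le_max_right ε εt) (le_max_right _ _)
  have hlθ : l ≤ θ := by rw [hθ]; exact le_trans (le_max_left l lt) (le_max_left _ _)
  have hltθ : lt ≤ θ := by rw [hθ]; exact le_trans (le_max_right l lt) (le_max_left _ _)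
  have hθ0 : 0 ≤ θ := le_trans hdX.2.1 hεθ
  have hθα : θ < α := lt_of_lt_of_le hθmin (min_le_left _ _)
  have hθαt : θ < αt := lt_of_lt_of_le hθmin (min_le_right _ _)
  have hα0 : 0 < α := lt_of_le_of_lt hθ0 hθα
  have hαt0 : 0 < αt := lt_of_le_of_lt hθ0 hθαt
  have hε0 : 0 ≤ ε := hdX.2.1
  have hεt0 : 0 ≤ εt := hdY.2.1
  have hρsum : 0 < α + αt := by linarith
  have hρ0 : 0 < α + αt - ε - θ := by linarith
  have hL₂0 : 0 < L₂ := lt_of_lt_of_le zero_lt_one hL₂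
  -- positivity of the parametrized norms
  have hNA0 : ∀ r (x : EuclideanSpace ℝ (Fin n)), 0 ≤ r → 0 ≤ NA r x := fun r x hr =>
    le_trans (by positivity) (hsandA r x hr).1
  have hNB0 : ∀ r (x : EuclideanSpace ℝ (Fin m)), 0 ≤ r → 0 ≤ NB r x := fun r x hr =>
    le_trans (by positivity) (hsandB r x hr).1
  -- nonnegativity of the uniform constants
  have hκ0 : 0 ≤ κ := by
    have h1 := hPX1 0 0 le_rfl le_rfl
    have h2 := pnorm_nonneg (fun x => hNA0 0 x le_rfl) (fun x => hNA0 0 x le_rfl)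
      ((X 0 0).comp (PA 0))
    simp only [sub_self, mul_zero, neg_zero, Real.exp_zero, mul_one] at h1
    linarith
  have hκt0 : 0 ≤ κt := by
    have h1 := hPY1 0 0 le_rfl le_rfl
    have h2 := pnorm_nonneg (fun x => hNB0 0 x le_rfl) (fun x => hNB0 0 x le_rfl)
      ((Y 0 0).comp (PB 0))
    simp only [sub_self, mul_zero, neg_zero, Real.exp_zero, mul_one] at h1
    linarith
  have hcC0 : 0 ≤ cC := by
    have h1 := hCbound 0 le_rfl
    have h2 := pnorm_nonneg (fun x => hNB0 0 x le_rfl) (fun x => hNA0 0 x le_rfl) (C 0)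
    linarith
  have hμ0 : 0 ≤ μ := by
    have h1 := hBGX 0 0 le_rfl le_rfl
    have h2 := pnorm_nonneg (fun x => hNA0 0 x le_rfl) (fun x => hNA0 0 x le_rfl) (X 0 0)
    simp only [sub_self, mul_zero, Real.exp_zero, mul_one] at h1
    linarith
  have hμt0 : 0 ≤ μt := by
    have h1 := hBGY 0 0 le_rfl le_rfl
    have h2 := pnorm_nonneg (fun x => hNB0 0 x le_rfl) (fun x => hNB0 0 x le_rfl) (Y 0 0)
    simp only [sub_self, mul_zero, Real.exp_zero, mul_one] at h1
    linarith
  -- parametrized-norm vector bounds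
  have vbXP : ∀ τ r (x : EuclideanSpace ℝ (Fin n)), 0 ≤ τ → τ ≤ r →
      NA r ((X r τ) ((PAt X PA τ) x)) ≤ κ * Real.exp (-α * (r - τ)) * NA τ x := by
    intro τ r x hτ hτr
    have hr : 0 ≤ r := le_trans hτ hτr
    rw [PAt_eq hX hdX hτ]
    have h1 := pnorm_apply_le (s := τ) (t := r) hNAfam hNAfam hL₁
      (mul_nonneg hL₂0.le (Real.exp_pos _).le)
      (fun z => (hsandA τ z hτ).1) (fun z => (hsandA r z hr).2) ((X r τ).comp (PA τ)) x
    exact le_trans h1 (mul_le_mul_of_nonneg_right (hPX1 τ r hτ hτr) (hNA0 τ x hτ))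
  have vbXQ : ∀ r τ (x : EuclideanSpace ℝ (Fin n)), 0 ≤ r → r ≤ τ →
      NA r ((X r τ) ((QAt X PA τ) x)) ≤ κ * Real.exp (-α * (τ - r)) * NA τ x := by
    intro r τ x hr hrτ
    have hτ : 0 ≤ τ := le_trans hr hrτ
    rw [QAt_eq hX hdX hτ]
    have h1 := pnorm_apply_le (s := τ) (t := r) hNAfam hNAfam hL₁
      (mul_nonneg hL₂0.le (Real.exp_pos _).le)
      (fun z => (hsandA τ z hτ).1) (fun z => (hsandA r z hr).2)
      ((X r τ).comp (ContinuousLinearMap.id ℝ _ - PA τ)) x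
    exact le_trans h1 (mul_le_mul_of_nonneg_right (hPX2 r τ hr hrτ) (hNA0 τ x hτ))
  have vbYP : ∀ τ r (x : EuclideanSpace ℝ (Fin m)), 0 ≤ τ → τ ≤ r →
      NB r ((Y r τ) ((PAt Y PB τ) x)) ≤ κt * Real.exp (-αt * (r - τ)) * NB τ x := by
    intro τ r x hτ hτr
    have hr : 0 ≤ r := le_trans hτ hτr
    rw [PAt_eq hY hdY hτ]
    have h1 := pnorm_apply_le (s := τ) (t := r) hNBfam hNBfam hL₁
      (mul_nonneg hL₂0.le (Real.exp_pos _).le)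
      (fun z => (hsandB τ z hτ).1) (fun z => (hsandB r z hr).2) ((Y r τ).comp (PB τ)) x
    exact le_trans h1 (mul_le_mul_of_nonneg_right (hPY1 τ r hτ hτr) (hNB0 τ x hτ))
  have vbYQ : ∀ r τ (x : EuclideanSpace ℝ (Fin m)), 0 ≤ r → r ≤ τ →
      NB r ((Y r τ) ((QAt Y PB τ) x)) ≤ κt * Real.exp (-αt * (τ - r)) * NB τ x := by
    intro r τ x hr hrτ
    have hτ : 0 ≤ τ := le_trans hr hrτ
    rw [QAt_eq hY hdY hτ]
    have h1 := pnorm_apply_le (s := τ) (t := r) hNBfam hNBfam hL₁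
      (mul_nonneg hL₂0.le (Real.exp_pos _).le)
      (fun z => (hsandB τ z hτ).1) (fun z => (hsandB r z hr).2)
      ((Y r τ).comp (ContinuousLinearMap.id ℝ _ - PB τ)) x
    exact le_trans h1 (mul_le_mul_of_nonneg_right (hPY2 r τ hr hrτ) (hNB0 τ x hτ))
  have vbC : ∀ τ (y : EuclideanSpace ℝ (Fin m)), 0 ≤ τ →
      NA τ ((C τ) y) ≤ cC * NB τ y := by
    intro τ y hτ
    have h1 := pnorm_apply_le (s := τ) (t := τ) hNBfam hNAfam hL₁
      (mul_nonneg hL₂0.le (Real.exp_pos _).le)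
      (fun z => (hsandB τ z hτ).1) (fun z => (hsandA τ z hτ).2) (C τ) y
    exact le_trans h1 (mul_le_mul_of_nonneg_right (hCbound τ hτ) (hNB0 τ y hτ))
  have vbXfull : ∀ τ r (x : EuclideanSpace ℝ (Fin n)), 0 ≤ τ → τ ≤ r →
      NA r ((X r τ) x) ≤ μ * Real.exp (w * (r - τ)) * NA τ x := by
    intro τ r x hτ hτr
    have hr : 0 ≤ r := le_trans hτ hτr
    have h1 := pnorm_apply_le (s := τ) (t := r) hNAfam hNAfam hL₁
      (mul_nonneg hL₂0.le (Real.exp_pos _).le)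
      (fun z => (hsandA τ z hτ).1) (fun z => (hsandA r z hr).2) (X r τ) x
    exact le_trans h1 (mul_le_mul_of_nonneg_right (hBGX τ r hτ hτr) (hNA0 τ x hτ))
  have vbYfull : ∀ τ r (x : EuclideanSpace ℝ (Fin m)), 0 ≤ τ → τ ≤ r →
      NB r ((Y r τ) x) ≤ μt * Real.exp (wt * (r - τ)) * NB τ x := by
    intro τ r x hτ hτr
    have hr : 0 ≤ r := le_trans hτ hτr
    have h1 := pnorm_apply_le (s := τ) (t := r) hNBfam hNBfam hL₁
      (mul_nonneg hL₂0.le (Real.exp_pos _).le)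
      (fun z => (hsandB τ z hτ).1) (fun z => (hsandB r z hr).2) (Y r τ) x
    exact le_trans h1 (mul_le_mul_of_nonneg_right (hBGY τ r hτ hτr) (hNB0 τ x hτ))
  -- Euclidean bound on the off-diagonal block
  have hCn : ∀ τ, 0 ≤ τ → ‖C τ‖ ≤ (L₂ * cC / L₁) * Real.exp (θ * τ) := by
    intro τ hτ
    refine ContinuousLinearMap.opNorm_le_bound _
      (mul_nonneg (div_nonneg (mul_nonneg hL₂0.le hcC0) hL₁.le) (Real.exp_pos _).le)
      (fun y => ?_)
    have h1 : L₁ * ‖(C τ) y‖ ≤ NA τ ((C τ) y) := (hsandA τ _ hτ).1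
    have h2 := vbC τ y hτ
    have h3 : NB τ y ≤ L₂ * Real.exp (θ * τ) * ‖y‖ := (hsandB τ y hτ).2
    have h4 : cC * NB τ y ≤ cC * (L₂ * Real.exp (θ * τ) * ‖y‖) :=
      mul_le_mul_of_nonneg_left h3 hcC0
    rw [show (L₂ * cC / L₁) * Real.exp (θ * τ) * ‖y‖
        = (cC * (L₂ * Real.exp (θ * τ) * ‖y‖)) / L₁ from by field_simp]
    rw [le_div_iff₀ hL₁]
    exact le_trans (le_trans (le_of_eq (mul_comm _ _)) h1) (le_trans h2 h4)
  -- integrability on half-lines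
  have hI2 : ∀ t' s' a : ℝ, 0 ≤ t' → 0 ≤ s' → 0 ≤ a →
      IntegrableOn (fun τ => ggO X Y (G2op X Y C PA PB) t' s' τ) (Set.Ioi a) volume :=
    fun t' s' a h1 h2 h3 => intI_G2_Ioi hX hY hC hdX hdY hCn hρ0 h1 h2 h3
  -- the block form of the full evolution operator
  have hTb : ∀ t s : ℝ, T t s = blockUpper (X t s) (Y t s) (evolW X Y C t s) :=
    T_eq_block hX hY hC hT
  -- dichotomy constants for the triangular system
  have hθm' : θ < min α αt := hθmin
  set αb := (θ + min α αt) / 2 with hαbdef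
  have hθαb : θ < αb := by rw [hαbdef]; linarith
  have hαb0 : 0 < αb := lt_of_le_of_lt hθ0 hθαb
  have hαbm' : αb < min α αt := by rw [hαbdef]; linarith
  have hαbα : αb ≤ α := le_trans hαbm'.le (min_le_left _ _)
  have hαbαt : αb ≤ αt := le_trans hαbm'.le (min_le_right _ _)
  have hδ'0 : 0 < min α αt - αb := by linarith
  set Dfull := κ * κt * cC * (2 / (α + αt) + 1 / (min α αt - αb)) with hDdef
  have hD0 : 0 ≤ Dfull := by
    rw [hDdef]
    refine mul_nonneg (mul_nonneg (mul_nonneg hκ0 hκt0) hcC0) ?_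
    exact add_nonneg (div_nonneg (by norm_num) hρsum.le) (div_nonneg zero_le_one hδ'0.le)
  have hDL : 0 ≤ Dfull * L₂ / L₁ := div_nonneg (mul_nonneg hD0 hL₂0.le) hL₁.le
  set Kb := max 1 (K + Kt + Dfull * L₂ / L₁) with hKbdef
  have hK0 : 0 ≤ K := le_trans zero_le_one hdX.1
  have hKt0 : 0 ≤ Kt := le_trans zero_le_one hdY.1
  constructor
  · -- the nonuniform exponential dichotomy
    refine ⟨Pproj X Y C PA PB, Kb, θ, αb, le_max_left _ _, hθ0, hθαb, ?_, ?_, ?_, ?_⟩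
    · exact fun t ht => Pproj_idem hX hY hC hdX hdY hI2 ht
    · intro t s ht hs
      rw [hTb t s]
      exact Pproj_invar hX hY hC hI2 ht hs
    · -- forward estimate
      intro s t hs hst
      have ht : 0 ≤ t := le_trans hs hst
      have hts0 : 0 ≤ t - s := by linarith
      rw [hTb t s]
      show ‖(blockUpper (X t s) (Y t s) (evolW X Y C t s)).comp (Pproj X Y C PA PB s)‖ ≤ _
      rw [Pproj, blockUpper_comp]
      refine le_trans (blockUpper_norm_le _ _ _) ?_
      have he1p : (0:ℝ) < Real.exp (-αb * (t - s)) := Real.exp_pos _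
      have he2p : (0:ℝ) < Real.exp (θ * s) := Real.exp_pos _
      have hb1 : ‖(X t s).comp (PAt X PA s)‖
          ≤ K * (Real.exp (-αb * (t - s)) * Real.exp (θ * s)) := by
        rw [PAt_eq hX hdX hs]
        refine le_trans (ned_est1 hdX s t hs hst) ?_
        have k1 : Real.exp (-α * (t - s)) ≤ Real.exp (-αb * (t - s)) := by
          rw [Real.exp_le_exp]
          exact mul_le_mul_of_nonneg_right (neg_le_neg hαbα) hts0
        have k2 : Real.exp (ε * s) ≤ Real.exp (θ * s) := by
          rw [Real.exp_le_exp]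
          exact mul_le_mul_of_nonneg_right hεθ hs
        calc K * Real.exp (-α * (t - s)) * Real.exp (ε * s)
            ≤ K * Real.exp (-αb * (t - s)) * Real.exp (θ * s) := by
              refine mul_le_mul (mul_le_mul_of_nonneg_left k1 hK0) k2
                (Real.exp_pos _).le (by positivity)
        _ = K * (Real.exp (-αb * (t - s)) * Real.exp (θ * s)) := by ring
      have hb2 : ‖(Y t s).comp (PAt Y PB s)‖
          ≤ Kt * (Real.exp (-αb * (t - s)) * Real.exp (θ * s)) := by
        rw [PAt_eq hY hdY hs]
        refine le_trans (ned_est1 hdY s t hs hst) ?_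
        have k1 : Real.exp (-αt * (t - s)) ≤ Real.exp (-αb * (t - s)) := by
          rw [Real.exp_le_exp]
          exact mul_le_mul_of_nonneg_right (neg_le_neg hαbαt) hts0
        have k2 : Real.exp (εt * s) ≤ Real.exp (θ * s) := by
          rw [Real.exp_le_exp]
          exact mul_le_mul_of_nonneg_right hεtθ hs
        calc Kt * Real.exp (-αt * (t - s)) * Real.exp (εt * s)
            ≤ Kt * Real.exp (-αb * (t - s)) * Real.exp (θ * s) := by
              refine mul_le_mul (mul_le_mul_of_nonneg_left k1 hKt0) k2
                (Real.exp_pos _).le (by positivity)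
        _ = Kt * (Real.exp (-αb * (t - s)) * Real.exp (θ * s)) := by ring
      have hb3 : ‖(X t s).comp (GammaOp X Y C PA PB s) + (evolW X Y C t s).comp (PAt Y PB s)‖
          ≤ (Dfull * L₂ / L₁) * (Real.exp (-αb * (t - s)) * Real.exp (θ * s)) := by
        refine ContinuousLinearMap.opNorm_le_bound _
          (mul_nonneg hDL (by positivity)) (fun y => ?_)
        have h1 := TR_forward_bound hX hY hC hI2 hNAfam hNBfam vbXP vbXQ vbYP vbYQ vbC
          hκ0 hκt0 hcC0 hα0 hαt0 hαb0 hαbα hαbαt hδ'0 hNB0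
          (cNt := L₂ * Real.exp (θ * t)) (fun x => (hsandA t x ht).2) hs hst y
        have h2 : L₁ * ‖((X t s).comp (GammaOp X Y C PA PB s) +
            (evolW X Y C t s).comp (PAt Y PB s)) y‖
            ≤ NA t (((X t s).comp (GammaOp X Y C PA PB s) +
              (evolW X Y C t s).comp (PAt Y PB s)) y) := (hsandA t _ ht).1
        have h3 : NB s y ≤ L₂ * Real.exp (θ * s) * ‖y‖ := (hsandB s y hs).2
        have h4 : NA t (((X t s).comp (GammaOp X Y C PA PB s) +
            (evolW X Y C t s).comp (PAt Y PB s)) y)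
            ≤ Dfull * Real.exp (-αb * (t - s)) * (L₂ * Real.exp (θ * s) * ‖y‖) :=
          le_trans h1 (mul_le_mul_of_nonneg_left h3 (mul_nonneg hD0 he1p.le))
        rw [show (Dfull * L₂ / L₁) * (Real.exp (-αb * (t - s)) * Real.exp (θ * s)) * ‖y‖
            = (Dfull * Real.exp (-αb * (t - s)) * (L₂ * Real.exp (θ * s) * ‖y‖)) / L₁ from by
          field_simp]
        rw [le_div_iff₀ hL₁]
        exact le_trans (le_trans (le_of_eq (mul_comm _ _)) h2) h4
      have hKsum : K + Kt + Dfull * L₂ / L₁ ≤ Kb := le_max_right _ _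
      have hfin : (K + Kt + Dfull * L₂ / L₁) * (Real.exp (-αb * (t - s)) * Real.exp (θ * s))
          ≤ Kb * (Real.exp (-αb * (t - s)) * Real.exp (θ * s)) :=
        mul_le_mul_of_nonneg_right hKsum (by positivity)
      calc ‖(X t s).comp (PAt X PA s)‖ + ‖(Y t s).comp (PAt Y PB s)‖ +
            ‖(X t s).comp (GammaOp X Y C PA PB s) + (evolW X Y C t s).comp (PAt Y PB s)‖
          ≤ K * (Real.exp (-αb * (t - s)) * Real.exp (θ * s))
            + Kt * (Real.exp (-αb * (t - s)) * Real.exp (θ * s))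
            + (Dfull * L₂ / L₁) * (Real.exp (-αb * (t - s)) * Real.exp (θ * s)) :=
            add_le_add (add_le_add hb1 hb2) hb3
      _ = (K + Kt + Dfull * L₂ / L₁) * (Real.exp (-αb * (t - s)) * Real.exp (θ * s)) := by
            ring
      _ ≤ Kb * (Real.exp (-αb * (t - s)) * Real.exp (θ * s)) := hfin
      _ = Kb * Real.exp (-αb * (t - s)) * Real.exp (θ * s) := by ring
    · -- backward estimate
      intro t s ht hts
      have hs : 0 ≤ s := le_trans ht hts
      have hts0 : 0 ≤ s - t := by linarith
      rw [hTb t s]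
      have hqe : ContinuousLinearMap.id ℝ
            (EuclideanSpace ℝ (Fin n) × EuclideanSpace ℝ (Fin m)) - Pproj X Y C PA PB s
          = blockUpper (QAt X PA s) (QAt Y PB s) (-(GammaOp X Y C PA PB s)) := by
        rw [Pproj, id_eq_blockUpper, blockUpper_sub]
        simp [QAt, zero_sub]
      rw [hqe, blockUpper_comp]
      refine le_trans (blockUpper_norm_le _ _ _) ?_
      have he1p : (0:ℝ) < Real.exp (-αb * (s - t)) := Real.exp_pos _
      have he2p : (0:ℝ) < Real.exp (θ * s) := Real.exp_pos _
      have hb1 : ‖(X t s).comp (QAt X PA s)‖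
          ≤ K * (Real.exp (-αb * (s - t)) * Real.exp (θ * s)) := by
        rw [QAt_eq hX hdX hs]
        refine le_trans (ned_est2 hdX t s ht hts) ?_
        have k1 : Real.exp (-α * (s - t)) ≤ Real.exp (-αb * (s - t)) := by
          rw [Real.exp_le_exp]
          exact mul_le_mul_of_nonneg_right (neg_le_neg hαbα) hts0
        have k2 : Real.exp (ε * s) ≤ Real.exp (θ * s) := by
          rw [Real.exp_le_exp]
          exact mul_le_mul_of_nonneg_right hεθ hs
        calc K * Real.exp (-α * (s - t)) * Real.exp (ε * s)
            ≤ K * Real.exp (-αb * (s - t)) * Real.exp (θ * s) := by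
              refine mul_le_mul (mul_le_mul_of_nonneg_left k1 hK0) k2
                (Real.exp_pos _).le (by positivity)
        _ = K * (Real.exp (-αb * (s - t)) * Real.exp (θ * s)) := by ring
      have hb2 : ‖(Y t s).comp (QAt Y PB s)‖
          ≤ Kt * (Real.exp (-αb * (s - t)) * Real.exp (θ * s)) := by
        rw [QAt_eq hY hdY hs]
        refine le_trans (ned_est2 hdY t s ht hts) ?_
        have k1 : Real.exp (-αt * (s - t)) ≤ Real.exp (-αb * (s - t)) := by
          rw [Real.exp_le_exp]
          exact mul_le_mul_of_nonneg_right (neg_le_neg hαbαt) hts0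
        have k2 : Real.exp (εt * s) ≤ Real.exp (θ * s) := by
          rw [Real.exp_le_exp]
          exact mul_le_mul_of_nonneg_right hεtθ hs
        calc Kt * Real.exp (-αt * (s - t)) * Real.exp (εt * s)
            ≤ Kt * Real.exp (-αb * (s - t)) * Real.exp (θ * s) := by
              refine mul_le_mul (mul_le_mul_of_nonneg_left k1 hKt0) k2
                (Real.exp_pos _).le (by positivity)
        _ = Kt * (Real.exp (-αb * (s - t)) * Real.exp (θ * s)) := by ring
      have hb3 : ‖(X t s).comp (-(GammaOp X Y C PA PB s)) +
            (evolW X Y C t s).comp (QAt Y PB s)‖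
          ≤ (Dfull * L₂ / L₁) * (Real.exp (-αb * (s - t)) * Real.exp (θ * s)) := by
        rw [ContinuousLinearMap.comp_neg]
        refine ContinuousLinearMap.opNorm_le_bound _
          (mul_nonneg hDL (by positivity)) (fun y => ?_)
        have h1 := TR_backward_bound hX hY hC hI2 hNAfam hNBfam vbXP vbXQ vbYP vbYQ vbC
          hκ0 hκt0 hcC0 hα0 hαt0 hαb0 hαbα hαbαt hδ'0 hNB0
          (cNt := L₂ * Real.exp (θ * t)) (fun x => (hsandA t x ht).2) ht hts y
        have h2 : L₁ * ‖(-((X t s).comp (GammaOp X Y C PA PB s)) +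
            (evolW X Y C t s).comp (QAt Y PB s)) y‖
            ≤ NA t ((-((X t s).comp (GammaOp X Y C PA PB s)) +
              (evolW X Y C t s).comp (QAt Y PB s)) y) := (hsandA t _ ht).1
        have h3 : NB s y ≤ L₂ * Real.exp (θ * s) * ‖y‖ := (hsandB s y hs).2
        have h4 : NA t ((-((X t s).comp (GammaOp X Y C PA PB s)) +
            (evolW X Y C t s).comp (QAt Y PB s)) y)
            ≤ Dfull * Real.exp (-αb * (s - t)) * (L₂ * Real.exp (θ * s) * ‖y‖) :=
          le_trans h1 (mul_le_mul_of_nonneg_left h3 (mul_nonneg hD0 he1p.le))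
        rw [show (Dfull * L₂ / L₁) * (Real.exp (-αb * (s - t)) * Real.exp (θ * s)) * ‖y‖
            = (Dfull * Real.exp (-αb * (s - t)) * (L₂ * Real.exp (θ * s) * ‖y‖)) / L₁ from by
          field_simp]
        rw [le_div_iff₀ hL₁]
        exact le_trans (le_trans (le_of_eq (mul_comm _ _)) h2) h4
      have hKsum : K + Kt + Dfull * L₂ / L₁ ≤ Kb := le_max_right _ _
      have hfin : (K + Kt + Dfull * L₂ / L₁) * (Real.exp (-αb * (s - t)) * Real.exp (θ * s))
          ≤ Kb * (Real.exp (-αb * (s - t)) * Real.exp (θ * s)) :=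
        mul_le_mul_of_nonneg_right hKsum (by positivity)
      calc ‖(X t s).comp (QAt X PA s)‖ + ‖(Y t s).comp (QAt Y PB s)‖ +
            ‖(X t s).comp (-(GammaOp X Y C PA PB s)) + (evolW X Y C t s).comp (QAt Y PB s)‖
          ≤ K * (Real.exp (-αb * (s - t)) * Real.exp (θ * s))
            + Kt * (Real.exp (-αb * (s - t)) * Real.exp (θ * s))
            + (Dfull * L₂ / L₁) * (Real.exp (-αb * (s - t)) * Real.exp (θ * s)) :=
            add_le_add (add_le_add hb1 hb2) hb3
      _ = (K + Kt + Dfull * L₂ / L₁) * (Real.exp (-αb * (s - t)) * Real.exp (θ * s)) := by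
            ring
      _ ≤ Kb * (Real.exp (-αb * (s - t)) * Real.exp (θ * s)) := hfin
      _ = Kb * Real.exp (-αb * (s - t)) * Real.exp (θ * s) := by ring
  · -- half nonuniform bounded growth
    have hw0 : 0 < w := hbgX.2.2.1
    have hwt0 : 0 < wt := hbgY.2.2.1
    have hM1 : 1 ≤ M := hbgX.1
    have hMt1 : 1 ≤ Mt := hbgY.1
    have hM0 : 0 ≤ M := le_trans zero_le_one hM1
    have hMt0 : 0 ≤ Mt := le_trans zero_le_one hMt1
    have hl0 : 0 ≤ l := hbgX.2.1
    have hlt0 : 0 ≤ lt := hbgY.2.1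
    have hWc0 : 0 ≤ L₂ * (μ * μt * cC) / L₁ :=
      div_nonneg (mul_nonneg hL₂0.le (mul_nonneg (mul_nonneg hμ0 hμt0) hcC0)) hL₁.le
    refine ⟨max 1 (M + Mt + L₂ * (μ * μt * cC) / L₁), θ, max w wt + 1, le_max_left _ _, hθ0,
      by have := le_max_left w wt; linarith, ?_⟩
    intro s t hs hst
    have ht : 0 ≤ t := le_trans hs hst
    have hts0 : 0 ≤ t - s := by linarith
    rw [hTb t s]
    refine le_trans (blockUpper_norm_le _ _ _) ?_
    have he1p : (0:ℝ) < Real.exp ((max w wt + 1) * (t - s)) := Real.exp_pos _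
    have he2p : (0:ℝ) < Real.exp (θ * s) := Real.exp_pos _
    have hwm : w ≤ max w wt + 1 := by have := le_max_left w wt; linarith
    have hwtm : wt ≤ max w wt + 1 := by have := le_max_right w wt; linarith
    have hb1 : ‖X t s‖ ≤ M * (Real.exp ((max w wt + 1) * (t - s)) * Real.exp (θ * s)) := by
      refine le_trans (hbgX.2.2.2 s t hs hst) ?_
      have k1 : Real.exp (w * (t - s)) ≤ Real.exp ((max w wt + 1) * (t - s)) := by
        rw [Real.exp_le_exp]
        exact mul_le_mul_of_nonneg_right hwm hts0
      have k2 : Real.exp (l * s) ≤ Real.exp (θ * s) := by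
        rw [Real.exp_le_exp]
        exact mul_le_mul_of_nonneg_right hlθ hs
      calc M * Real.exp (w * (t - s)) * Real.exp (l * s)
          ≤ M * Real.exp ((max w wt + 1) * (t - s)) * Real.exp (θ * s) := by
            refine mul_le_mul (mul_le_mul_of_nonneg_left k1 hM0) k2
              (Real.exp_pos _).le (by positivity)
      _ = M * (Real.exp ((max w wt + 1) * (t - s)) * Real.exp (θ * s)) := by ring
    have hb2 : ‖Y t s‖ ≤ Mt * (Real.exp ((max w wt + 1) * (t - s)) * Real.exp (θ * s)) := by
      refine le_trans (hbgY.2.2.2 s t hs hst) ?_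
      have k1 : Real.exp (wt * (t - s)) ≤ Real.exp ((max w wt + 1) * (t - s)) := by
        rw [Real.exp_le_exp]
        exact mul_le_mul_of_nonneg_right hwtm hts0
      have k2 : Real.exp (lt * s) ≤ Real.exp (θ * s) := by
        rw [Real.exp_le_exp]
        exact mul_le_mul_of_nonneg_right hltθ hs
      calc Mt * Real.exp (wt * (t - s)) * Real.exp (lt * s)
          ≤ Mt * Real.exp ((max w wt + 1) * (t - s)) * Real.exp (θ * s) := by
            refine mul_le_mul (mul_le_mul_of_nonneg_left k1 hMt0) k2
              (Real.exp_pos _).le (by positivity)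
      _ = Mt * (Real.exp ((max w wt + 1) * (t - s)) * Real.exp (θ * s)) := by ring
    have hWvec : ∀ y : EuclideanSpace ℝ (Fin m), NA t ((evolW X Y C t s) y)
        ≤ (μ * μt * cC * Real.exp ((max w wt + 1) * (t - s))) * NB s y := by
      intro y
      have hrw : evolW X Y C t s = ∫ τ in Set.Ioc s t, ((X t τ).comp ((C τ).comp (Y τ s))) :=
        intervalIntegral.integral_of_le hst
      rw [hrw]
      set cW := μ * μt * cC * Real.exp (max w wt * (t - s)) * NB s y with hcWdef
      have hcW0 : 0 ≤ cW := by
        rw [hcWdef]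
        refine mul_nonneg (mul_nonneg (mul_nonneg (mul_nonneg hμ0 hμt0) hcC0)
          (Real.exp_pos _).le) (hNB0 s y hs)
      have hpt : ∀ τ ∈ Set.Ioc s t,
          NA t (((X t τ).comp ((C τ).comp (Y τ s))) y) ≤ cW := by
        intro τ hτ
        have hsτ : s ≤ τ := hτ.1.le
        have hτ0 : 0 ≤ τ := le_trans hs hsτ
        have hτt : τ ≤ t := hτ.2
        show NA t ((X t τ) ((C τ) ((Y τ s) y))) ≤ cW
        calc NA t ((X t τ) ((C τ) ((Y τ s) y)))
            ≤ μ * Real.exp (w * (t - τ)) * NA τ ((C τ) ((Y τ s) y)) :=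
              vbXfull τ t _ hτ0 hτt
        _ ≤ μ * Real.exp (w * (t - τ)) * (cC * NB τ ((Y τ s) y)) :=
              mul_le_mul_of_nonneg_left (vbC τ _ hτ0)
                (mul_nonneg hμ0 (Real.exp_pos _).le)
        _ ≤ μ * Real.exp (w * (t - τ)) * (cC * (μt * Real.exp (wt * (τ - s)) * NB s y)) :=
              mul_le_mul_of_nonneg_left
                (mul_le_mul_of_nonneg_left (vbYfull s τ y hs hsτ) hcC0)
                (mul_nonneg hμ0 (Real.exp_pos _).le)
        _ ≤ cW := by
              rw [hcWdef]
              rw [show μ * Real.exp (w * (t - τ)) * (cC * (μt * Real.exp (wt * (τ - s)) * NB s y))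
                  = μ * μt * cC * NB s y * (Real.exp (w * (t - τ)) * Real.exp (wt * (τ - s)))
                from by ring]
              rw [show μ * μt * cC * Real.exp (max w wt * (t - s)) * NB s y
                  = μ * μt * cC * NB s y * Real.exp (max w wt * (t - s)) from by ring]
              refine mul_le_mul_of_nonneg_left ?_
                (mul_nonneg (mul_nonneg (mul_nonneg hμ0 hμt0) hcC0) (hNB0 s y hs))
              rw [← Real.exp_add, Real.exp_le_exp]
              have hw1 : w ≤ max w wt := le_max_left _ _
              have hw2 : wt ≤ max w wt := le_max_right _ _
              calc w * (t - τ) + wt * (τ - s)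
                  ≤ max w wt * (t - τ) + max w wt * (τ - s) :=
                    add_le_add (mul_le_mul_of_nonneg_right hw1 (by linarith))
                      (mul_le_mul_of_nonneg_right hw2 (by linarith))
              _ = max w wt * (t - s) := by ring
      have hb : IntegrableOn (fun _ : ℝ => cW) (Set.Ioc s t) volume :=
        integrableOn_const (by rw [Real.volume_Ioc]; exact ENNReal.ofReal_ne_top)
      have h1 := term_bound (NA t) (fun a b => hNAfam.1 t a b) (fun c x => hNAfam.2 t c x)
        (fun x => (hsandA t x ht).2) measurableSet_Ioc
        (sandwich_integrableOn_Ioc hC (evol_cont_snd hX t) (evol_cont_fst hY s) s t) y hb hpt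
      refine le_trans h1 ?_
      rw [setIntegral_const, Real.volume_real_Ioc_of_le (by linarith), smul_eq_mul]
      have h3 : (t - s) ≤ Real.exp (t - s) := by
        have := Real.add_one_le_exp (t - s); linarith
      calc (t - s) * cW ≤ Real.exp (t - s) * cW :=
            mul_le_mul_of_nonneg_right h3 hcW0
      _ = (μ * μt * cC * Real.exp ((max w wt + 1) * (t - s))) * NB s y := by
            rw [hcWdef]
            rw [show Real.exp ((max w wt + 1) * (t - s))
                = Real.exp (max w wt * (t - s)) * Real.exp (t - s) from by
              rw [← Real.exp_add]; congr 1; ring]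
            ring
    have hb3 : ‖evolW X Y C t s‖ ≤ (L₂ * (μ * μt * cC) / L₁) *
        (Real.exp ((max w wt + 1) * (t - s)) * Real.exp (θ * s)) := by
      refine ContinuousLinearMap.opNorm_le_bound _
        (mul_nonneg hWc0 (by positivity)) (fun y => ?_)
      have h2 : L₁ * ‖(evolW X Y C t s) y‖ ≤ NA t ((evolW X Y C t s) y) := (hsandA t _ ht).1
      have h3 : NB s y ≤ L₂ * Real.exp (θ * s) * ‖y‖ := (hsandB s y hs).2
      have h4 : NA t ((evolW X Y C t s) y)
          ≤ (μ * μt * cC * Real.exp ((max w wt + 1) * (t - s))) * (L₂ * Real.exp (θ * s) * ‖y‖) :=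
        le_trans (hWvec y) (mul_le_mul_of_nonneg_left h3
          (mul_nonneg (mul_nonneg (mul_nonneg hμ0 hμt0) hcC0) (Real.exp_pos _).le))
      rw [show (L₂ * (μ * μt * cC) / L₁) *
          (Real.exp ((max w wt + 1) * (t - s)) * Real.exp (θ * s)) * ‖y‖
          = ((μ * μt * cC * Real.exp ((max w wt + 1) * (t - s))) *
            (L₂ * Real.exp (θ * s) * ‖y‖)) / L₁ from by field_simp]
      rw [le_div_iff₀ hL₁]
      exact le_trans (le_trans (le_of_eq (mul_comm _ _)) h2) h4
    have hMsum : M + Mt + L₂ * (μ * μt * cC) / L₁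
        ≤ max 1 (M + Mt + L₂ * (μ * μt * cC) / L₁) := le_max_right _ _
    calc ‖X t s‖ + ‖Y t s‖ + ‖evolW X Y C t s‖
        ≤ M * (Real.exp ((max w wt + 1) * (t - s)) * Real.exp (θ * s))
          + Mt * (Real.exp ((max w wt + 1) * (t - s)) * Real.exp (θ * s))
          + (L₂ * (μ * μt * cC) / L₁) *
            (Real.exp ((max w wt + 1) * (t - s)) * Real.exp (θ * s)) :=
          add_le_add (add_le_add hb1 hb2) hb3
    _ = (M + Mt + L₂ * (μ * μt * cC) / L₁) *
          (Real.exp ((max w wt + 1) * (t - s)) * Real.exp (θ * s)) := by ring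
    _ ≤ max 1 (M + Mt + L₂ * (μ * μt * cC) / L₁) *
          (Real.exp ((max w wt + 1) * (t - s)) * Real.exp (θ * s)) :=
          mul_le_mul_of_nonneg_right hMsum (by positivity)
    _ = max 1 (M + Mt + L₂ * (μ * μt * cC) / L₁) *
          Real.exp ((max w wt + 1) * (t - s)) * Real.exp (θ * s) := by ring

end
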